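/- arXiv:math-ph/9902007 — 7 statements merged into one kernel-verified Lean document; each statement's English description precedes it below -/
import Mathlib

section
/- Let n ≥ 1, μ ≠ 0 real, ξ a loop with holonomy path h_ξ and monodromy M_ξ, and let γ : ℝ → U(n) be a unitary gauge transformation. Then γ fixes ξ under the gauge action, i.e. γ ξ γ⁻¹ − μ γ' γ⁻¹ = ξ, if and only if γ(θ) = h_ξ(θ) γ(0) h_ξ(θ)⁻¹ for all θ ∈ ℝ and γ(0) commutes with M_ξ. (This is the description of the isotropy subgroup Z_ξ of the loop-group action.) -/
attribute [local instance] Matrix.normedAddCommGroup Matrix.normedSpace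

open Real Matrix

noncomputable def isotropyMulCLM (n : ℕ) :
    Matrix (Fin n) (Fin n) ℂ →L[ℝ] Matrix (Fin n) (Fin n) ℂ →L[ℝ] Matrix (Fin n) (Fin n) ℂ :=
  LinearMap.toContinuousLinearMap
    { toFun := fun A => LinearMap.toContinuousLinearMap
        { toFun := fun B => A * B
          map_add' := fun B C => Matrix.mul_add A B C
          map_smul' := fun r B => by simp [Matrix.mul_smul] }
      map_add' := fun A B => by ext C; simp [Matrix.add_mul]
      map_smul' := fun r A => by ext C; simp [Matrix.smul_mul] }

theorem isotropyMulCLM_apply {n : ℕ} (A B : Matrix (Fin n) (Fin n) ℂ) :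
    isotropyMulCLM n A B = A * B := rfl

theorem HasDerivAt.matmul {n : ℕ} {f g : ℝ → Matrix (Fin n) (Fin n) ℂ}
    {f' g' : Matrix (Fin n) (Fin n) ℂ} {θ : ℝ}
    (hf : HasDerivAt f f' θ) (hg : HasDerivAt g g' θ) :
    HasDerivAt (fun t => f t * g t) (f' * g θ + f θ * g') θ := by
  have hf' : ∀ i j, HasDerivAt (fun t => f t i j) (f' i j) θ := fun i j =>
    hasDerivAt_pi.mp (hasDerivAt_pi.mp hf i) j
  have hg' : ∀ i j, HasDerivAt (fun t => g t i j) (g' i j) θ := fun i j =>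
    hasDerivAt_pi.mp (hasDerivAt_pi.mp hg i) j
  refine hasDerivAt_pi.mpr fun i => hasDerivAt_pi.mpr fun j => ?_
  simp only [Matrix.mul_apply, Matrix.add_apply, ← Finset.sum_add_distrib]
  exact HasDerivAt.fun_sum fun k _ => (hf' i k).mul (hg' k j)

noncomputable def isotropyCtCLM (n : ℕ) :
    Matrix (Fin n) (Fin n) ℂ →L[ℝ] Matrix (Fin n) (Fin n) ℂ :=
  LinearMap.toContinuousLinearMap
    { toFun := fun A => Aᴴ
      map_add' := fun A B => Matrix.conjTranspose_add A B
      map_smul' := fun r A => by ext i j; simp [Matrix.conjTranspose_apply, star_smul] }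

theorem HasDerivAt.matct {n : ℕ} {f : ℝ → Matrix (Fin n) (Fin n) ℂ}
    {f' : Matrix (Fin n) (Fin n) ℂ} {θ : ℝ}
    (hf : HasDerivAt f f' θ) : HasDerivAt (fun t => (f t)ᴴ) f'ᴴ θ :=
  (isotropyCtCLM n).hasFDerivAt.comp_hasDerivAt θ hf

theorem ct_real_smul {n : ℕ} (r : ℝ) (A : Matrix (Fin n) (Fin n) ℂ) :
    (r • A)ᴴ = r • Aᴴ := by
  ext i j; simp [Matrix.conjTranspose_apply, star_smul]

set_option maxHeartbeats 1000000 in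
/-- A unitary gauge transformation `γ` fixes the loop `ξ`
(`γ ξ γ⁻¹ − μ γ' γ⁻¹ = ξ`) if and only if `γ(θ) = h_ξ(θ) γ(0) h_ξ(θ)⁻¹` for all `θ`
and `γ(0)` commutes with the monodromy `M_ξ = h_ξ(2π)`.  This describes the isotropy
subgroup `Z_ξ` of the loop-group action. -/
theorem isotropy_subgroup_description
    {n : ℕ} (hn : 1 ≤ n) (μ : ℝ) (hμ : μ ≠ 0)
    (ξ : ℝ → Matrix (Fin n) (Fin n) ℂ)
    (hξ_smooth : ContDiff ℝ (⊤ : ℕ∞) ξ)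
    (hξ_per : ∀ θ : ℝ, ξ (θ + 2 * π) = ξ θ)
    (hξ_skew : ∀ θ : ℝ, (ξ θ)ᴴ = -ξ θ)
    (h : ℝ → Matrix (Fin n) (Fin n) ℂ)
    (h0 : h 0 = 1)
    (hode : ∀ θ : ℝ, HasDerivAt h (-(μ⁻¹) • (ξ θ * h θ)) θ)
    (γ : ℝ → Matrix (Fin n) (Fin n) ℂ)
    (hγ_smooth : ContDiff ℝ (⊤ : ℕ∞) γ)
    (hγ_per : ∀ θ : ℝ, γ (θ + 2 * π) = γ θ)
    (hγ_unitary : ∀ θ : ℝ, γ θ ∈ Matrix.unitaryGroup (Fin n) ℂ) :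
    (∀ θ : ℝ, γ θ * ξ θ * (γ θ)⁻¹ - μ • (deriv γ θ * (γ θ)⁻¹) = ξ θ) ↔
      ((∀ θ : ℝ, γ θ = h θ * γ 0 * (h θ)⁻¹) ∧
        γ 0 * h (2 * π) = h (2 * π) * γ 0) := by
  -- derivative of h† is μ⁻¹ • (h† ξ)
  have hct : ∀ θ : ℝ, HasDerivAt (fun t => (h t)ᴴ) (μ⁻¹ • ((h θ)ᴴ * ξ θ)) θ := by
    intro θ
    have := (hode θ).matct
    have e : (-(μ⁻¹) • (ξ θ * h θ))ᴴ = μ⁻¹ • ((h θ)ᴴ * ξ θ) := by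
      rw [ct_real_smul, Matrix.conjTranspose_mul, hξ_skew, Matrix.mul_neg, smul_neg, neg_smul,
        neg_neg]
    rwa [e] at this
  -- h is unitary: h† h = 1
  have hHh : ∀ θ : ℝ, (h θ)ᴴ * h θ = 1 := by
    have hdiff : ∀ θ : ℝ, HasDerivAt (fun t => (h t)ᴴ * h t) 0 θ := by
      intro θ
      have := (hct θ).matmul (hode θ)
      have e : μ⁻¹ • ((h θ)ᴴ * ξ θ) * h θ + (h θ)ᴴ * (-(μ⁻¹) • (ξ θ * h θ)) = 0 := by
        rw [Matrix.smul_mul, Matrix.mul_smul, Matrix.mul_assoc, ← Matrix.mul_assoc,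
          Matrix.mul_assoc ((h θ)ᴴ), neg_smul, add_neg_cancel]
      rwa [e] at this
    intro θ
    have hc : (fun t => (h t)ᴴ * h t) θ = (fun t => (h t)ᴴ * h t) 0 :=
      is_const_of_deriv_eq_zero (fun t => (hdiff t).differentiableAt)
        (fun t => (hdiff t).deriv) θ 0
    simpa [h0] using hc
  have hhH : ∀ θ : ℝ, h θ * (h θ)ᴴ = 1 := fun θ => mul_eq_one_comm.mp (hHh θ)
  have hinv : ∀ θ : ℝ, (h θ)⁻¹ = (h θ)ᴴ := fun θ => Matrix.inv_eq_left_inv (hHh θ)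
  have hγinv : ∀ θ : ℝ, (γ θ)⁻¹ = (γ θ)ᴴ := by
    intro θ
    refine Matrix.inv_eq_left_inv ?_
    simpa [Matrix.star_eq_conjTranspose] using (hγ_unitary θ).1
  have hγHγ : ∀ θ : ℝ, (γ θ)ᴴ * γ θ = 1 := by
    intro θ; simpa [Matrix.star_eq_conjTranspose] using (hγ_unitary θ).1
  have hγγH : ∀ θ : ℝ, γ θ * (γ θ)ᴴ = 1 := by
    intro θ; simpa [Matrix.star_eq_conjTranspose] using (hγ_unitary θ).2
  constructor
  · intro H
    -- γ' = μ⁻¹ • (γ ξ - ξ γ)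
    have hγ' : ∀ θ : ℝ, HasDerivAt γ (μ⁻¹ • (γ θ * ξ θ - ξ θ * γ θ)) θ := by
      intro θ
      have hd : HasDerivAt γ (deriv γ θ) θ :=
        ((hγ_smooth.differentiable (by simp)) θ).hasDerivAt
      have e1 := congrArg (fun A => A * γ θ) (H θ)
      simp only [Matrix.sub_mul, Matrix.smul_mul, Matrix.mul_assoc, hγinv θ, hγHγ θ,
        Matrix.mul_one] at e1
      -- e1 : γ ξ - μ • deriv γ θ = ξ γ
      have e2 : deriv γ θ = μ⁻¹ • (γ θ * ξ θ - ξ θ * γ θ) := by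
        have : μ • deriv γ θ = γ θ * ξ θ - ξ θ * γ θ := by
          rw [← e1]; abel
        rw [← this, smul_smul, inv_mul_cancel₀ hμ, one_smul]
      rwa [e2] at hd
    -- k = h† γ h is constant
    have hk : ∀ θ : ℝ, HasDerivAt (fun t => (h t)ᴴ * γ t * h t) 0 θ := by
      intro θ
      have := ((hct θ).matmul (hγ' θ)).matmul (hode θ)
      have e : (μ⁻¹ • ((h θ)ᴴ * ξ θ) * γ θ + (h θ)ᴴ * (μ⁻¹ • (γ θ * ξ θ - ξ θ * γ θ))) * h θ +
          (h θ)ᴴ * γ θ * (-(μ⁻¹) • (ξ θ * h θ)) = 0 := by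
        simp only [Matrix.smul_mul, Matrix.mul_smul, Matrix.mul_sub, Matrix.sub_mul,
          Matrix.add_mul, smul_sub, Matrix.mul_assoc]
        module
      rwa [e] at this
    have hkconst : ∀ θ : ℝ, (h θ)ᴴ * γ θ * h θ = γ 0 := by
      intro θ
      have hc : (fun t => (h t)ᴴ * γ t * h t) θ = (fun t => (h t)ᴴ * γ t * h t) 0 :=
        is_const_of_deriv_eq_zero (fun t => (hk t).differentiableAt)
          (fun t => (hk t).deriv) θ 0
      simpa [h0] using hc
    have hγeq : ∀ θ : ℝ, γ θ = h θ * γ 0 * (h θ)⁻¹ := by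
      intro θ
      rw [hinv θ, ← hkconst θ]
      calc γ θ = (h θ * (h θ)ᴴ) * γ θ * (h θ * (h θ)ᴴ) := by rw [hhH θ]; simp
        _ = h θ * ((h θ)ᴴ * γ θ * h θ) * (h θ)ᴴ := by
            simp only [Matrix.mul_assoc]
    refine ⟨hγeq, ?_⟩
    have h2π : γ (2 * π) = γ 0 := by
      have := hγ_per 0
      rwa [zero_add] at this
    have := hγeq (2 * π)
    rw [h2π, hinv] at this
    -- γ 0 = h(2π) γ 0 h(2π)†
    have := congrArg (fun A => A * h (2 * π)) this
    simp only [Matrix.mul_assoc, hHh, Matrix.mul_one] at this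
    exact this
  · rintro ⟨hγeq, -⟩
    intro θ
    have hγfun : γ = fun t => h t * γ 0 * (h t)ᴴ := by
      funext t; rw [hγeq t, hinv t]
    -- compute derivative of γ
    have hd1 : HasDerivAt (fun t => h t * γ 0)
        (-(μ⁻¹) • (ξ θ * h θ) * γ 0 + h θ * 0) θ :=
      (hode θ).matmul (hasDerivAt_const θ (γ 0))
    have hd2 : HasDerivAt (fun t => h t * γ 0 * (h t)ᴴ)
        ((-(μ⁻¹) • (ξ θ * h θ) * γ 0 + h θ * 0) * (h θ)ᴴ +
          h θ * γ 0 * (μ⁻¹ • ((h θ)ᴴ * ξ θ))) θ :=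
      hd1.matmul (hct θ)
    have hd : HasDerivAt γ
        ((-(μ⁻¹) • (ξ θ * h θ) * γ 0 + h θ * 0) * (h θ)ᴴ +
          h θ * γ 0 * (μ⁻¹ • ((h θ)ᴴ * ξ θ))) θ :=
      hd2.congr_of_eventuallyEq
        (Filter.Eventually.of_forall fun t => by rw [hγeq t, hinv t])
    have hderiv : deriv γ θ = -(μ⁻¹) • (ξ θ * (h θ * γ 0 * (h θ)ᴴ)) +
        μ⁻¹ • ((h θ * γ 0 * (h θ)ᴴ) * ξ θ) := by
      have := hd.deriv
      refine this.trans ?_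
      simp only [Matrix.mul_zero, add_zero, Matrix.smul_mul, Matrix.mul_smul,
        Matrix.mul_assoc]
    have hγt : γ θ = h θ * γ 0 * (h θ)ᴴ := by rw [hγeq θ, hinv θ]
    have key : γ θ * ξ θ - μ • deriv γ θ = ξ θ * γ θ := by
      rw [hderiv, ← hγt, smul_add, smul_smul, smul_smul, mul_neg, mul_inv_cancel₀ hμ,
        neg_one_smul, one_smul]
      abel
    calc γ θ * ξ θ * (γ θ)⁻¹ - μ • (deriv γ θ * (γ θ)⁻¹)
        = (γ θ * ξ θ - μ • deriv γ θ) * (γ θ)⁻¹ := by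
          rw [Matrix.sub_mul, Matrix.smul_mul]
      _ = ξ θ * γ θ * (γ θ)⁻¹ := by rw [key]
      _ = ξ θ := by rw [Matrix.mul_assoc, hγinv θ, hγγH θ, Matrix.mul_one]
end

section
/- Let n ≥ 1, μ ≠ 0 real, and let ξ₁, ξ₂ be two loops (smooth 2π-periodic skew-Hermitian valued) with holonomy paths h_{ξ₁}, h_{ξ₂} and monodromies M_{ξ₁}, M_{ξ₂}. If there exists a unitary matrix g ∈ U(n) with M_{ξ₂} = g M_{ξ₁} g⁻¹, then γ(θ) := h_{ξ₂}(θ) g h_{ξ₁}(θ)⁻¹ defines a smooth 2π-periodic map γ : ℝ → U(n) satisfying γ ξ₁ γ⁻¹ − μ γ' γ⁻¹ = ξ₂; that is, loops with conjugate monodromies lie in the same gauge orbit. -/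
set_option maxHeartbeats 1000000


attribute [local instance] Matrix.normedAddCommGroup Matrix.normedSpace

open Real Matrix

namespace ConjMono

variable {n : ℕ}

noncomputable abbrev Mn (n : ℕ) := Matrix (Fin n) (Fin n) ℂ

noncomputable abbrev mnTop (n : ℕ) : TopologicalSpace (Mn n) :=
  (Matrix.normedAddCommGroup : NormedAddCommGroup (Mn n)).toMetricSpace.toUniformSpace.toTopologicalSpace

attribute [local instance high] mnTop

noncomputable def mulCLM (n : ℕ) : Mn n →L[ℝ] Mn n →L[ℝ] Mn n :=
  LinearMap.toContinuousLinearMap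
    { toFun := fun A => LinearMap.toContinuousLinearMap (LinearMap.mul ℝ (Mn n) A)
      map_add' := by intro A B; ext C; simp [add_mul]
      map_smul' := by intro r A; ext C; simp [smul_mul_assoc] }

lemma mulCLM_apply (A B : Mn n) : mulCLM n A B = A * B := rfl

noncomputable def starCLM (n : ℕ) : Mn n →L[ℝ] Mn n :=
  LinearMap.toContinuousLinearMap
    { toFun := fun A => star A
      map_add' := fun A B => star_add A B
      map_smul' := by intro r A; simp [star_smul] }

lemma starCLM_apply (A : Mn n) : starCLM n A = Aᴴ := rfl

lemma hasDerivAt_mul {f g : ℝ → Mn n} {f' g' : Mn n} {x : ℝ}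
    (hf : HasDerivAt f f' x) (hg : HasDerivAt g g' x) :
    HasDerivAt (fun θ => f θ * g θ) (f' * g x + f x * g') x := by
  have h1 : HasDerivAt (fun θ => mulCLM n (f θ)) (mulCLM n f') x :=
    (mulCLM n).hasFDerivAt.comp_hasDerivAt x hf
  simpa [mulCLM_apply] using h1.clm_apply hg

lemma hasDerivAt_star {f : ℝ → Mn n} {f' : Mn n} {x : ℝ}
    (hf : HasDerivAt f f' x) :
    HasDerivAt (fun θ => (f θ)ᴴ) f'ᴴ x := by
  simpa [starCLM_apply, Function.comp_def] using (starCLM n).hasFDerivAt.comp_hasDerivAt x hf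

lemma const_of_deriv_zero {f : ℝ → Mn n} (hd : ∀ θ, HasDerivAt f 0 θ) (θ : ℝ) :
    f θ = f 0 :=
  is_const_of_deriv_eq_zero (fun x => (hd x).differentiableAt) (fun x => (hd x).deriv) θ 0

noncomputable def picardCoeff (c : ℕ → Mn n) (v : Mn n) : ℕ → Mn n
  | 0 => v
  | (m + 1) => ((m : ℝ) + 1)⁻¹ • ∑ k ∈ Finset.range (m + 1), c k * picardCoeff c v (m - k)
  decreasing_by exact Nat.lt_succ_of_le (Nat.sub_le m k)

end ConjMono


open ConjMono

/-- If the monodromies of two loops `ξ₁, ξ₂` are conjugate by a unitary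
matrix `g`, then `γ(θ) := h_{ξ₂}(θ) g h_{ξ₁}(θ)⁻¹` is a smooth `2π`-periodic unitary
gauge transformation carrying `ξ₁` to `ξ₂`: loops with conjugate monodromies lie in
the same gauge orbit. -/
theorem conjugate_monodromies_same_orbit
    {n : ℕ} (hn : 1 ≤ n) (μ : ℝ) (hμ : μ ≠ 0)
    (ξ₁ ξ₂ : ℝ → Matrix (Fin n) (Fin n) ℂ)
    (hξ₁_smooth : ContDiff ℝ (⊤ : ℕ∞) ξ₁) (hξ₂_smooth : ContDiff ℝ (⊤ : ℕ∞) ξ₂)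
    (hξ₁_per : ∀ θ : ℝ, ξ₁ (θ + 2 * π) = ξ₁ θ)
    (hξ₂_per : ∀ θ : ℝ, ξ₂ (θ + 2 * π) = ξ₂ θ)
    (hξ₁_skew : ∀ θ : ℝ, (ξ₁ θ)ᴴ = -ξ₁ θ)
    (hξ₂_skew : ∀ θ : ℝ, (ξ₂ θ)ᴴ = -ξ₂ θ)
    (h₁ h₂ : ℝ → Matrix (Fin n) (Fin n) ℂ)
    (h₁0 : h₁ 0 = 1) (h₂0 : h₂ 0 = 1)
    (hode₁ : ∀ θ : ℝ, HasDerivAt h₁ (-(μ⁻¹) • (ξ₁ θ * h₁ θ)) θ)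
    (hode₂ : ∀ θ : ℝ, HasDerivAt h₂ (-(μ⁻¹) • (ξ₂ θ * h₂ θ)) θ)
    (g : Matrix (Fin n) (Fin n) ℂ)
    (hg : g ∈ Matrix.unitaryGroup (Fin n) ℂ)
    (hconj : h₂ (2 * π) = g * h₁ (2 * π) * g⁻¹) :
    ContDiff ℝ (⊤ : ℕ∞) (fun θ => h₂ θ * g * (h₁ θ)⁻¹) ∧
    (∀ θ : ℝ, h₂ (θ + 2 * π) * g * (h₁ (θ + 2 * π))⁻¹ = h₂ θ * g * (h₁ θ)⁻¹) ∧
    (∀ θ : ℝ, h₂ θ * g * (h₁ θ)⁻¹ ∈ Matrix.unitaryGroup (Fin n) ℂ) ∧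
    (∀ θ : ℝ,
      (h₂ θ * g * (h₁ θ)⁻¹) * ξ₁ θ * (h₂ θ * g * (h₁ θ)⁻¹)⁻¹ -
        μ • (deriv (fun s => h₂ s * g * (h₁ s)⁻¹) θ * (h₂ θ * g * (h₁ θ)⁻¹)⁻¹) = ξ₂ θ) := by
  -- the conjugate-transpose path solves the adjoint ODE
  have hstarode : ∀ (ξ h : ℝ → Mn n), (∀ θ, (ξ θ)ᴴ = -ξ θ) →
      (∀ θ, HasDerivAt h (-(μ⁻¹) • (ξ θ * h θ)) θ) →
      ∀ σ : ℝ, HasDerivAt (fun y => (h y)ᴴ) ((μ⁻¹:ℝ) • ((h σ)ᴴ * ξ σ)) σ := by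
    intro ξ h hskew hode σ
    have h1 := ConjMono.hasDerivAt_star (hode σ)
    have h2 : (-(μ⁻¹) • (ξ σ * h σ))ᴴ = (μ⁻¹:ℝ) • ((h σ)ᴴ * ξ σ) := by
      calc (-(μ⁻¹) • (ξ σ * h σ))ᴴ = (-(μ⁻¹)) • ((ξ σ * h σ))ᴴ := by
            rw [show ((-(μ⁻¹)) • (ξ σ * h σ))ᴴ = star ((-(μ⁻¹)) • (ξ σ * h σ)) from rfl,
              star_smul, star_trivial]
            rfl
        _ = (-(μ⁻¹)) • ((h σ)ᴴ * (ξ σ)ᴴ) := by rw [conjTranspose_mul]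
        _ = (μ⁻¹:ℝ) • ((h σ)ᴴ * ξ σ) := by
            rw [hskew σ, Matrix.mul_neg, smul_neg, neg_smul, neg_neg]
    rwa [h2] at h1
  -- unitarity of the holonomy paths
  have uni : ∀ (ξ h : ℝ → Mn n), (∀ θ, (ξ θ)ᴴ = -ξ θ) → h 0 = 1 →
      (∀ θ, HasDerivAt h (-(μ⁻¹) • (ξ θ * h θ)) θ) → ∀ θ, (h θ)ᴴ * h θ = 1 := by
    intro ξ h hskew h0 hode θ
    have hconst : ∀ θ : ℝ, (h θ)ᴴ * h θ = (h 0)ᴴ * h 0 := by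
      intro θ'
      refine ConjMono.const_of_deriv_zero (f := fun y => (h y)ᴴ * h y) ?_ θ'
      intro σ
      have hd := ConjMono.hasDerivAt_mul (hstarode ξ h hskew hode σ) (hode σ)
      have e : (μ⁻¹:ℝ) • ((h σ)ᴴ * ξ σ) * h σ + (h σ)ᴴ * (-(μ⁻¹) • (ξ σ * h σ)) = 0 := by
        rw [smul_mul_assoc, Matrix.mul_smul, Matrix.mul_assoc, neg_smul]
        exact add_neg_cancel _
      rwa [e] at hd
    rw [hconst θ, h0]
    simp
  have hu₁ := uni ξ₁ h₁ hξ₁_skew h₁0 hode₁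
  have hu₂ := uni ξ₂ h₂ hξ₂_skew h₂0 hode₂
  have hu₁' : ∀ θ, h₁ θ * (h₁ θ)ᴴ = 1 := fun θ => mul_eq_one_comm.mp (hu₁ θ)
  have hu₂' : ∀ θ, h₂ θ * (h₂ θ)ᴴ = 1 := fun θ => mul_eq_one_comm.mp (hu₂ θ)
  have hinv₁ : ∀ θ, (h₁ θ)⁻¹ = (h₁ θ)ᴴ := fun θ => Matrix.inv_eq_left_inv (hu₁ θ)
  have hgl : gᴴ * g = 1 := by
    have := Matrix.mem_unitaryGroup_iff'.mp hg
    simpa [Matrix.star_eq_conjTranspose] using this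
  have hgr : g * gᴴ = 1 := mul_eq_one_comm.mp hgl
  have hginv : g⁻¹ = gᴴ := Matrix.inv_eq_left_inv hgl
  -- periodicity of the holonomy paths
  have per : ∀ (ξ h : ℝ → Mn n), (∀ θ, ξ (θ + 2*π) = ξ θ) → (∀ θ, (ξ θ)ᴴ = -ξ θ) →
      h 0 = 1 → (∀ θ, HasDerivAt h (-(μ⁻¹) • (ξ θ * h θ)) θ) →
      (∀ θ, h θ * (h θ)ᴴ = 1) → ∀ θ, h (θ + 2*π) = h θ * h (2*π) := by
    intro ξ h hper hskew h0 hode hh'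
    have hk : ∀ θ : ℝ, HasDerivAt (fun y => h (y + 2*π)) (-(μ⁻¹) • (ξ θ * h (θ + 2*π))) θ := by
      intro θ
      have h1 := (hode (θ + 2*π)).scomp θ ((hasDerivAt_id θ).add_const (2*π))
      simp only [one_smul, Function.comp] at h1
      rwa [hper] at h1
    have hconst : ∀ θ : ℝ, (h θ)ᴴ * h (θ + 2*π) = (h 0)ᴴ * h (0 + 2*π) := by
      intro θ'
      refine ConjMono.const_of_deriv_zero (f := fun y => (h y)ᴴ * h (y + 2*π)) ?_ θ'
      intro σ
      have hd := ConjMono.hasDerivAt_mul (hstarode ξ h hskew hode σ) (hk σ)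
      have e : (μ⁻¹:ℝ) • ((h σ)ᴴ * ξ σ) * h (σ + 2*π)
          + (h σ)ᴴ * (-(μ⁻¹) • (ξ σ * h (σ + 2*π))) = 0 := by
        rw [smul_mul_assoc, Matrix.mul_smul, Matrix.mul_assoc, neg_smul]
        exact add_neg_cancel _
      rwa [e] at hd
    intro θ
    have h2 : (h θ)ᴴ * h (θ + 2*π) = h (2*π) := by
      rw [hconst θ, h0, zero_add]
      simp
    calc h (θ + 2*π) = (h θ * (h θ)ᴴ) * h (θ + 2*π) := by rw [hh' θ, Matrix.one_mul]
      _ = h θ * ((h θ)ᴴ * h (θ + 2*π)) := by rw [Matrix.mul_assoc]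
      _ = h θ * h (2*π) := by rw [h2]
  have hper₁ := per ξ₁ h₁ hξ₁_per hξ₁_skew h₁0 hode₁ hu₁'
  have hper₂ := per ξ₂ h₂ hξ₂_per hξ₂_skew h₂0 hode₂ hu₂'
  -- analyticity of the holonomy paths
  have hSm : ∀ (ξ h : ℝ → Mn n), ContDiff ℝ (⊤ : ℕ∞) ξ →
      (∀ θ, HasDerivAt h (-(μ⁻¹) • (ξ θ * h θ)) θ) → ContDiff ℝ (⊤ : ℕ∞) h := by
    intro ξ h hsm hode
    have hdiff : Differentiable ℝ h := fun θ => (hode θ).differentiableAt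
    have hder : deriv h = fun θ => (-(μ⁻¹):ℝ) • (ConjMono.mulCLM n (ξ θ)) (h θ) :=
      funext fun θ => (hode θ).deriv
    rw [contDiff_infty]
    intro k
    induction k with
    | zero => exact contDiff_zero.mpr hdiff.continuous
    | succ k ih =>
      rw [Nat.cast_succ, contDiff_succ_iff_deriv]
      refine ⟨hdiff, by simp, ?_⟩
      have hc : ContDiff ℝ (k : WithTop ℕ∞)
          (fun θ => (-(μ⁻¹):ℝ) • (ConjMono.mulCLM n (ξ θ)) (h θ)) :=
        (((ConjMono.mulCLM n).contDiff.comp (contDiff_infty.mp hsm k)).clm_apply ih).const_smul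
          ((-(μ⁻¹)):ℝ)
      exact Eq.mpr (congrArg (ContDiff ℝ (k : WithTop ℕ∞)) hder) hc
  have hs₁ := hSm ξ₁ h₁ hξ₁_smooth hode₁
  have hs₂ := hSm ξ₂ h₂ hξ₂_smooth hode₂
  -- analyticity toolbox
  have hanMul : ∀ {f₁ f₂ : ℝ → Mn n} {x : ℝ}, AnalyticAt ℝ f₁ x → AnalyticAt ℝ f₂ x →
      AnalyticAt ℝ (fun θ => f₁ θ * f₂ θ) x := by
    intro f₁ f₂ x p1 p2
    have hp : AnalyticAt ℝ (fun y : ℝ => (f₁ y, f₂ y)) x := p1.prod p2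
    have hb : AnalyticAt ℝ (fun q : Mn n × Mn n => ConjMono.mulCLM n q.1 q.2)
        ((fun y : ℝ => (f₁ y, f₂ y)) x) := (ConjMono.mulCLM n).analyticAt_bilinear _
    have h2 := AnalyticAt.comp (f := fun y : ℝ => (f₁ y, f₂ y)) hb hp
    simpa [Function.comp_def, ConjMono.mulCLM_apply] using h2
  have hanStar : ∀ {x : ℝ}, AnalyticAt ℝ h₁ x → AnalyticAt ℝ (fun θ => (h₁ θ)ᴴ) x := by
    intro x p
    have h2 := ((ConjMono.starCLM n).analyticAt (h₁ x)).comp p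
    simpa [Function.comp_def, ConjMono.starCLM_apply] using h2
  -- rewrite the inverse as conjugate transpose
  have hfun : (fun θ : ℝ => h₂ θ * g * (h₁ θ)⁻¹) = fun θ : ℝ => h₂ θ * g * (h₁ θ)ᴴ :=
    funext fun θ => by rw [hinv₁ θ]
  -- cancellation lemmas
  have cg : ∀ Z : Mn n, gᴴ * (g * Z) = Z := fun Z => by
    rw [← Matrix.mul_assoc, hgl, Matrix.one_mul]
  have cg' : ∀ Z : Mn n, g * (gᴴ * Z) = Z := fun Z => by
    rw [← Matrix.mul_assoc, hgr, Matrix.one_mul]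
  have c₁ : ∀ (θ : ℝ) (Z : Mn n), (h₁ θ)ᴴ * (h₁ θ * Z) = Z := fun θ Z => by
    rw [← Matrix.mul_assoc, hu₁ θ, Matrix.one_mul]
  have c₁' : ∀ (θ : ℝ) (Z : Mn n), h₁ θ * ((h₁ θ)ᴴ * Z) = Z := fun θ Z => by
    rw [← Matrix.mul_assoc, hu₁' θ, Matrix.one_mul]
  have c₂ : ∀ (θ : ℝ) (Z : Mn n), (h₂ θ)ᴴ * (h₂ θ * Z) = Z := fun θ Z => by
    rw [← Matrix.mul_assoc, hu₂ θ, Matrix.one_mul]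
  refine ⟨?_, ?_, ?_, ?_⟩
  · -- smoothness (analyticity)
    rw [hfun]
    exact ((ConjMono.mulCLM n).contDiff.comp
      (((ConjMono.mulCLM n).contDiff.comp hs₂).clm_apply contDiff_const)).clm_apply
      ((ConjMono.starCLM n).contDiff.comp hs₁)
  · -- periodicity
    intro θ
    rw [hinv₁, hinv₁, hper₁ θ, hper₂ θ, conjTranspose_mul]
    have hM₂ : h₂ (2*π) = g * h₁ (2*π) * gᴴ := by rw [hconj, hginv]
    have hMg : h₂ (2*π) * (g * (h₁ (2*π))ᴴ) = g := by
      rw [hM₂]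
      simp only [Matrix.mul_assoc, cg]
      rw [hu₁' (2*π), Matrix.mul_one]
    have e₂ : ∀ Z : Mn n, h₂ (2*π) * (g * ((h₁ (2*π))ᴴ * Z)) = g * Z := fun Z => by
      have : h₂ (2*π) * (g * ((h₁ (2*π))ᴴ * Z)) = (h₂ (2*π) * (g * (h₁ (2*π))ᴴ)) * Z := by
        simp only [Matrix.mul_assoc]
      rw [this, hMg]
    simp only [Matrix.mul_assoc, e₂]
  · -- unitarity
    intro θ
    rw [hinv₁ θ, Matrix.mem_unitaryGroup_iff']
    have hstar : star (h₂ θ * g * (h₁ θ)ᴴ) = h₁ θ * (gᴴ * (h₂ θ)ᴴ) := by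
      simp [Matrix.star_eq_conjTranspose, conjTranspose_mul, Matrix.mul_assoc]
    rw [hstar]
    simp only [Matrix.mul_assoc, c₂, cg]
    exact hu₁' θ
  · -- the gauge action identity
    intro θ
    rw [hfun, hinv₁ θ]
    have hγ : (h₂ θ * g * (h₁ θ)ᴴ)⁻¹ = h₁ θ * (gᴴ * (h₂ θ)ᴴ) := by
      apply Matrix.inv_eq_left_inv
      simp only [Matrix.mul_assoc, c₂, cg]
      exact hu₁' θ
    rw [hγ]
    have hd : HasDerivAt (fun s2 => h₂ s2 * g * (h₁ s2)ᴴ)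
        ((-(μ⁻¹) • (ξ₂ θ * h₂ θ) * g + h₂ θ * 0) * (h₁ θ)ᴴ
          + (h₂ θ * g) * ((μ⁻¹:ℝ) • ((h₁ θ)ᴴ * ξ₁ θ))) θ :=
      ConjMono.hasDerivAt_mul
        (ConjMono.hasDerivAt_mul (hode₂ θ) (hasDerivAt_const θ g))
        (hstarode ξ₁ h₁ hξ₁_skew hode₁ θ)
    rw [show deriv (fun θ => h₂ θ * g * (h₁ θ)ᴴ) θ = _ from hd.deriv]
    simp only [Matrix.mul_zero, add_zero, Matrix.smul_mul, Matrix.mul_smul, Matrix.mul_assoc,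
      add_mul, smul_add, smul_smul, c₁, cg', c₂]
    rw [mul_neg, mul_inv_cancel₀ hμ, neg_smul, one_smul]
    rw [hu₂' θ, Matrix.mul_one]
    simp only [one_smul, neg_smul]
    abel
end

section
/- Let p : ℂ → M_n(ℂ) be continuous on the closed unit disk and holomorphic on the open unit disk, with p(z) invertible for every z in the closed unit disk and p(z) unitary for every z with |z| = 1. Then p is constant on the closed unit disk, equal to a single unitary matrix. -/
attribute [local instance] Matrix.normedAddCommGroup Matrix.normedSpace

open Matrix Metric

private theorem entry_diff {n : ℕ} {p : ℂ → Matrix (Fin n) (Fin n) ℂ} {s : Set ℂ}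
    (h : DifferentiableOn ℂ p s) (i j : Fin n) :
    DifferentiableOn ℂ (fun z => p z i j) s :=
  (((ContinuousLinearMap.proj j : (Fin n → ℂ) →L[ℂ] ℂ).comp
    (ContinuousLinearMap.proj i : (Matrix (Fin n) (Fin n) ℂ) →L[ℂ] (Fin n → ℂ))).differentiable).comp_differentiableOn h

private theorem det_diff {n : ℕ} {f : ℂ → Matrix (Fin n) (Fin n) ℂ} {s : Set ℂ}
    (h : ∀ i j, DifferentiableOn ℂ (fun z => f z i j) s) :
    DifferentiableOn ℂ (fun z => (f z).det) s := by
  simp only [Matrix.det_apply, Units.smul_def, zsmul_eq_mul]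
  exact DifferentiableOn.fun_sum fun σ _ =>
    (differentiableOn_const _).mul (DifferentiableOn.fun_finset_prod (fun i _ => h (σ i) i))

private theorem adj_diff {n : ℕ} {f : ℂ → Matrix (Fin n) (Fin n) ℂ} {s : Set ℂ}
    (h : ∀ i j, DifferentiableOn ℂ (fun z => f z i j) s) (i j : Fin n) :
    DifferentiableOn ℂ (fun z => (f z).adjugate i j) s := by
  simp only [Matrix.adjugate_apply]
  apply det_diff
  intro i' j'
  simp only [Matrix.updateRow_apply]
  by_cases hij : i' = j
  · simp [hij]
  · simpa [hij] using h i' j'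

private theorem unitary_retrace {n : ℕ} (A : Matrix (Fin n) (Fin n) ℂ)
    (hA : A ∈ Matrix.unitaryGroup (Fin n) ℂ) (ht : (A.trace).re = n) : A = 1 := by
  have hrow : ∀ i : Fin n, ∑ j, Complex.normSq (A i j) = 1 := by
    intro i
    have h1 : (A * star A) i i = 1 := by
      rw [(Matrix.mem_unitaryGroup_iff).mp hA]; simp
    rw [Matrix.mul_apply] at h1
    have h2 : (↑(∑ j, Complex.normSq (A i j)) : ℂ) = 1 := by
      push_cast
      rw [← h1]
      refine Finset.sum_congr rfl fun j _ => ?_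
      simp [Matrix.star_apply, Complex.mul_conj]
    exact_mod_cast h2
  have hle : ∀ i : Fin n, (A i i).re ≤ 1 := by
    intro i
    have h3 : Complex.normSq (A i i) ≤ 1 := by
      rw [← hrow i]
      exact Finset.single_le_sum (fun j _ => Complex.normSq_nonneg _) (Finset.mem_univ i)
    nlinarith [Complex.normSq_apply (A i i), sq_nonneg ((A i i).im), sq_nonneg ((A i i).re - 1)]
  have hsum : ∑ i : Fin n, (A i i).re = n := by
    rw [← ht, Matrix.trace]; simp [Matrix.diag, Complex.re_sum]
  have heq : ∀ i : Fin n, (A i i).re = 1 := by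
    intro i
    by_contra hne
    have hlt : (A i i).re < 1 := lt_of_le_of_ne (hle i) hne
    have : ∑ i : Fin n, (A i i).re < ∑ _i : Fin n, (1:ℝ) :=
      Finset.sum_lt_sum (fun j _ => hle j) ⟨i, Finset.mem_univ i, hlt⟩
    simp [hsum] at this
  ext i j
  have hd : Complex.normSq (A i i) ≤ 1 := by
    rw [← hrow i]
    exact Finset.single_le_sum (fun j _ => Complex.normSq_nonneg _) (Finset.mem_univ i)
  have him : (A i i).im = 0 := by
    have := Complex.normSq_apply (A i i)
    nlinarith [heq i]
  have hdiag : A i i = 1 := by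
    have := heq i
    apply Complex.ext <;> simp [this, him]
  by_cases hij : i = j
  · subst hij; simp [hdiag]
  · have hns : Complex.normSq (A i i) = 1 := by simp [hdiag]
    have hzero : ∑ j ∈ Finset.univ.erase i, Complex.normSq (A i j) = 0 := by
      have := hrow i
      rw [← Finset.add_sum_erase _ _ (Finset.mem_univ i)] at this
      linarith [hns ▸ this]
    have hz0 : Complex.normSq (A i j) = 0 := by
      have hmem : j ∈ Finset.univ.erase i :=
        Finset.mem_erase.mpr ⟨fun h => hij h.symm, Finset.mem_univ j⟩
      exact (Finset.sum_eq_zero_iff_of_nonneg (fun k _ => Complex.normSq_nonneg _)).mp hzero j hmem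
    simp [Complex.normSq_eq_zero.mp hz0, Matrix.one_apply, hij]

/-- A matrix-valued function that is continuous on the closed unit disk,
holomorphic on the open unit disk, invertible everywhere on the closed disk and unitary
on the boundary circle is constant, equal to a single unitary matrix. -/
theorem holomorphic_invertible_unitary_boundary_is_constant
    {n : ℕ} (hn : 1 ≤ n) (p : ℂ → Matrix (Fin n) (Fin n) ℂ)
    (hcont : ContinuousOn p (closedBall (0 : ℂ) 1))
    (hhol : DifferentiableOn ℂ p (ball (0 : ℂ) 1))
    (hinv : ∀ z ∈ closedBall (0 : ℂ) 1, IsUnit (p z))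
    (hbdry : ∀ z : ℂ, ‖z‖ = 1 → p z ∈ Matrix.unitaryGroup (Fin n) ℂ) :
    ∃ u ∈ Matrix.unitaryGroup (Fin n) ℂ, ∀ z ∈ closedBall (0 : ℂ) 1, p z = u := by
  have h1mem : (1 : ℂ) ∈ closedBall (0 : ℂ) 1 := by
    simp [mem_closedBall, Complex.dist_eq]
  have habs1 : ‖(1 : ℂ)‖ = 1 := norm_one
  have hu : p 1 ∈ Matrix.unitaryGroup (Fin n) ℂ := hbdry 1 habs1
  set u : Matrix (Fin n) (Fin n) ℂ := p 1 with hu_def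
  set q : ℂ → Matrix (Fin n) (Fin n) ℂ := fun z => p z * star u with hq_def
  -- boundary points are in the closed ball
  have hsub : ∀ z : ℂ, ‖z‖ = 1 → z ∈ closedBall (0 : ℂ) 1 := by
    intro z hz; simp [mem_closedBall, Complex.dist_eq, hz]
  -- q is unitary on the boundary
  have hqbd : ∀ z : ℂ, ‖z‖ = 1 → q z ∈ Matrix.unitaryGroup (Fin n) ℂ :=
    fun z hz => mul_mem (hbdry z hz) (Unitary.star_mem hu)
  -- q is invertible on the closed disk
  have hqinv : ∀ z ∈ closedBall (0 : ℂ) 1, IsUnit (q z) :=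
    fun z hz => (hinv z hz).mul (hinv 1 h1mem).star
  have hdet0 : ∀ z ∈ closedBall (0 : ℂ) 1, (q z).det ≠ 0 := by
    intro z hz
    exact isUnit_iff_ne_zero.mp ((Matrix.isUnit_iff_isUnit_det _).mp (hqinv z hz))
  -- differentiability of entries of q
  have hqd : ∀ i j, DifferentiableOn ℂ (fun z => q z i j) (ball (0 : ℂ) 1) := by
    intro i j
    simp only [hq_def, Matrix.mul_apply]
    exact DifferentiableOn.fun_sum fun k _ => (entry_diff hhol i k).mul (differentiableOn_const _)
  -- continuity of q
  have hqc : ContinuousOn q (closedBall (0 : ℂ) 1) :=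
    ((continuous_id.matrix_mul continuous_const)).comp_continuousOn hcont
  -- the key scalar function
  set g : ℂ → ℂ := fun z => (q z).trace + ((q z).adjugate).trace / (q z).det with hg_def
  have hgd : DifferentiableOn ℂ g (ball (0 : ℂ) 1) := by
    apply DifferentiableOn.add
    · simp only [Matrix.trace, Matrix.diag]
      exact DifferentiableOn.fun_sum fun i _ => hqd i i
    · apply DifferentiableOn.div
      · simp only [Matrix.trace, Matrix.diag]
        exact DifferentiableOn.fun_sum fun i _ => adj_diff hqd i i
      · exact det_diff hqd
      · exact fun z hz => hdet0 z (ball_subset_closedBall hz)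
  have hgc : ContinuousOn g (closedBall (0 : ℂ) 1) := by
    apply ContinuousOn.add
    · exact (continuous_id.matrix_trace).comp_continuousOn hqc
    · exact ContinuousOn.div
        (((continuous_id.matrix_adjugate).matrix_trace).comp_continuousOn hqc)
        ((continuous_id.matrix_det).comp_continuousOn hqc) hdet0
  -- on the boundary, g z = t + conj t
  have hgbd : ∀ z : ℂ, ‖z‖ = 1 →
      g z = (q z).trace + (starRingEnd ℂ) ((q z).trace) := by
    intro z hz
    have hunit := hqbd z hz
    have hinv1 : (q z) * star (q z) = 1 := (Matrix.mem_unitaryGroup_iff).mp hunit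
    have hqinv' : (q z)⁻¹ = star (q z) := Matrix.inv_eq_right_inv hinv1
    have hdet : (q z).det ≠ 0 := hdet0 z (hsub z hz)
    have hadj : ((q z).adjugate).trace = (q z).det * ((q z)⁻¹).trace := by
      rw [Matrix.inv_def, Matrix.trace_smul]
      rw [smul_eq_mul, ← mul_assoc]
      rw [Ring.inverse_eq_inv, mul_inv_cancel₀ hdet, one_mul]
    rw [hg_def]
    simp only
    rw [hadj, mul_div_cancel_left₀ _ hdet, hqinv']
    congr 1
    rw [Matrix.star_eq_conjTranspose, Matrix.trace_conjTranspose]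
    rfl
  have hgim_bd : ∀ z : ℂ, ‖z‖ = 1 → (g z).im = 0 := by
    intro z hz
    rw [hgbd z hz]
    simp [Complex.add_im, Complex.conj_im]
  -- via the maximum principle applied to exp(±i g), Im g = 0 on the closed ball
  have hfr : frontier (ball (0:ℂ) 1) = sphere (0:ℂ) 1 := frontier_ball (0:ℂ) one_ne_zero
  have hcl : closure (ball (0:ℂ) 1) = closedBall (0:ℂ) 1 := closure_ball (0:ℂ) one_ne_zero
  have hsphere : ∀ z : ℂ, z ∈ sphere (0:ℂ) 1 → ‖z‖ = 1 := by
    intro z hz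
    simpa [Complex.dist_eq] using hz
  have him : ∀ z ∈ closedBall (0:ℂ) 1, (g z).im = 0 := by
    have key : ∀ c : ℂ, c.re = 0 → ∀ z ∈ closedBall (0:ℂ) 1,
        Real.exp ((c * g z).re) ≤ 1 := by
      intro c hc z hz
      have hdc : DiffContOnCl ℂ (fun z => Complex.exp (c * g z)) (ball (0:ℂ) 1) := by
        refine ⟨Complex.differentiable_exp.comp_differentiableOn
          ((differentiableOn_const c).mul hgd), ?_⟩
        rw [hcl]
        exact Complex.continuous_exp.comp_continuousOn (continuousOn_const.mul hgc)
      have := Complex.norm_le_of_forall_mem_frontier_norm_le isBounded_ball hdc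
        (C := 1) (fun w hw => ?_) (z := z) (by rw [hcl]; exact hz)
      · calc Real.exp ((c * g z).re) = ‖Complex.exp (c * g z)‖ := by
              rw [Complex.norm_exp]
            _ ≤ 1 := this
      · rw [hfr] at hw
        have habs := hsphere w hw
        have : (c * g w).re = 0 := by
          have := hgim_bd w habs
          simp [Complex.mul_re, this, hc]
        rw [Complex.norm_exp, this, Real.exp_zero]
    intro z hz
    have h1 := key Complex.I (by simp) z hz
    have h2 := key (-Complex.I) (by simp) z hz
    have e1 : (Complex.I * g z).re = -(g z).im := by simp [Complex.mul_re]
    have e2 : (-Complex.I * g z).re = (g z).im := by simp [Complex.mul_re]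
    rw [e1, Real.exp_le_one_iff] at h1
    rw [e2, Real.exp_le_one_iff] at h2
    linarith
  -- g is constant on the ball (open mapping theorem)
  have hconst : ∃ w, ∀ z ∈ ball (0:ℂ) 1, g z = w := by
    have hga : AnalyticOnNhd ℂ g (ball (0:ℂ) 1) := hgd.analyticOnNhd isOpen_ball
    rcases hga.is_constant_or_isOpen (convex_ball (0:ℂ) 1).isPreconnected with h | h
    · exact h
    · exfalso
      have hopen : IsOpen (g '' ball (0:ℂ) 1) := h _ subset_rfl isOpen_ball
      have h0 : (0:ℂ) ∈ ball (0:ℂ) 1 := by simp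
      have hmem : g 0 ∈ g '' ball (0:ℂ) 1 := ⟨0, h0, rfl⟩
      rcases Metric.isOpen_iff.mp hopen _ hmem with ⟨ε, hε, hball⟩
      have hw : g 0 + (↑(ε/2) : ℂ) * Complex.I ∈ g '' ball (0:ℂ) 1 := by
        apply hball
        simp only [mem_ball, dist_eq_norm]
        rw [add_sub_cancel_left]
        rw [norm_mul, Complex.norm_I, mul_one, Complex.norm_real]
        rw [Real.norm_eq_abs, abs_of_pos (by linarith)]
        linarith
      rcases hw with ⟨z, hz, hzeq⟩
      have him1 : (g z).im = 0 := him z (ball_subset_closedBall hz)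
      have him0 : (g 0).im = 0 := him 0 (ball_subset_closedBall h0)
      have hhalf : (g 0 + (↑(ε/2) : ℂ) * Complex.I).im = ε/2 := by
        simp [Complex.add_im, him0]
      rw [← hzeq, him1] at hhalf
      linarith
  -- hence constant on the closed ball, with value g 1 = 2n
  obtain ⟨w, hw⟩ := hconst
  have hwcl : ∀ z ∈ closedBall (0:ℂ) 1, g z = w := by
    intro z hz
    have : Set.EqOn g (fun _ => w) (closedBall (0:ℂ) 1) := by
      apply Set.EqOn.of_subset_closure (fun x hx => hw x hx) hgc continuousOn_const
        ball_subset_closedBall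
      rw [hcl]
    exact this hz
  have hq1 : q 1 = 1 := (Matrix.mem_unitaryGroup_iff).mp hu
  have hg1 : g 1 = 2 * n := by
    rw [hg_def]
    simp only [hq1]
    rw [Matrix.adjugate_one, Matrix.det_one, Matrix.trace_one]
    push_cast
    simp [Fintype.card_fin]
    ring
  have hw2n : w = 2 * n := by rw [← hwcl 1 h1mem, hg1]
  -- on the boundary q = 1
  have hqone_bd : ∀ z : ℂ, ‖z‖ = 1 → q z = 1 := by
    intro z hz
    apply unitary_retrace _ (hqbd z hz)
    have h1 : g z = 2 * n := by rw [hwcl z (hsub z hz), hw2n]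
    have h2 := hgbd z hz
    rw [h1] at h2
    have h3 := congrArg Complex.re h2.symm
    simp only [Complex.add_re, Complex.conj_re] at h3
    have : (2 * (n:ℂ)).re = 2 * n := by simp
    rw [this] at h3
    linarith
  -- by the maximum principle each entry of q - 1 vanishes on the closed ball
  have hqone : ∀ z ∈ closedBall (0:ℂ) 1, q z = 1 := by
    intro z hz
    ext i j
    have hdc : DiffContOnCl ℂ (fun z => q z i j - (1 : Matrix (Fin n) (Fin n) ℂ) i j)
        (ball (0:ℂ) 1) := by
      refine ⟨(hqd i j).sub (differentiableOn_const _), ?_⟩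
      rw [hcl]
      exact (((continuous_apply j).comp (continuous_apply i)).comp_continuousOn hqc).sub
        continuousOn_const
    have := Complex.norm_le_of_forall_mem_frontier_norm_le isBounded_ball hdc
      (C := 0) (fun w hw => ?_) (z := z) (by rw [hcl]; exact hz)
    · have h0 : q z i j - (1 : Matrix (Fin n) (Fin n) ℂ) i j = 0 := by
        simpa using norm_le_zero_iff.mp this
      exact sub_eq_zero.mp h0
    · rw [hfr] at hw
      rw [hqone_bd w (hsphere w hw)]
      simp
  -- conclude
  refine ⟨u, hu, fun z hz => ?_⟩
  have hstar : star u * u = 1 := (Matrix.mem_unitaryGroup_iff').mp hu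
  calc p z = p z * (star u * u) := by rw [hstar, mul_one]
    _ = (p z * star u) * u := by rw [mul_assoc]
    _ = 1 * u := by rw [show p z * star u = q z from rfl, hqone z hz]
    _ = u := one_mul u
end

section
/- Let U ⊆ ℂ be open and p : U → M_n(ℂ) holomorphic with p(z) invertible for every z ∈ U. Then the real-valued function φ(z) := tr(p(z)* p(z)) + tr((p(z)* p(z))⁻¹) is subharmonic on U in the sense of the sub-mean value inequality: for every c ∈ U and R > 0 with the closed disk {z : |z − c| ≤ R} contained in U, φ(c) ≤ (1/2π) ∫₀^{2π} φ(c + R e^{iθ}) dθ. -/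
/-! Each entry of `p` and of `p⁻¹` is holomorphic (Cramer's rule), and
`tr(Aᴴ A) = ∑ |A i j|²` while `tr((pᴴ p)⁻¹) = tr((p⁻¹)ᴴ p⁻¹)`, so `φ` is a finite sum of squared
moduli of holomorphic functions. Each `|f|²` satisfies the sub-mean value inequality: with
`a = f c`, which is the circle average of `f` by the mean value property,
`2 |a|² = ⨍ 2 Re (ā f) ≤ ⨍ (|a|² + |f|²)`. -/

attribute [local instance] Matrix.normedAddCommGroup Matrix.normedSpace

open Matrix Metric Real

namespace Matrix

variable {𝕜 m n : Type*} [RCLike 𝕜] [Fintype m] [Fintype n]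

theorem re_trace_conjTranspose_mul_self (A : Matrix m n 𝕜) :
    RCLike.re (Aᴴ * A).trace = ∑ i, ∑ j, ‖A i j‖ ^ 2 := by
  simp only [trace, diag, mul_apply, conjTranspose_apply, map_sum, RCLike.star_def,
    RCLike.conj_mul, ← RCLike.ofReal_pow, RCLike.ofReal_re]
  exact Finset.sum_comm

theorem trace_inv_conjTranspose_mul_self [DecidableEq n] (A : Matrix n n 𝕜) :
    ((Aᴴ * A)⁻¹).trace = ((A⁻¹)ᴴ * A⁻¹).trace := by
  rw [mul_inv_rev, ← conjTranspose_nonsing_inv, trace_mul_comm]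

end Matrix

section Differentiability

variable {𝕜 E : Type*} [NontriviallyNormedField 𝕜] [NormedAddCommGroup E] [NormedSpace 𝕜 E]
  {s : Set E}

theorem DifferentiableOn.matrix_apply {m n : Type*} [Fintype m] [Fintype n]
    {A : E → Matrix m n 𝕜} (hA : DifferentiableOn 𝕜 A s) (i : m) (j : n) :
    DifferentiableOn 𝕜 (fun x => A x i j) s :=
  differentiableOn_pi.mp (differentiableOn_pi.mp hA i) j

variable {m : Type*} [Fintype m] [DecidableEq m] {A : E → Matrix m m 𝕜}

theorem DifferentiableOn.matrix_det (hA : DifferentiableOn 𝕜 A s) :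
    DifferentiableOn 𝕜 (fun x => (A x).det) s := by
  simp only [det_apply']
  refine .fun_sum fun σ _ => .const_mul ?_ _
  have : DifferentiableOn 𝕜 (∏ i, fun x => A x (σ i) i) s :=
    Finset.prod_induction _ (DifferentiableOn 𝕜 · s) (fun _ _ => .mul)
      (differentiableOn_const 1) fun i _ => hA.matrix_apply (σ i) i
  simpa only [Finset.prod_fn] using this

theorem DifferentiableOn.matrix_adjugate (hA : DifferentiableOn 𝕜 A s) :
    DifferentiableOn 𝕜 (fun x => (A x).adjugate) s := by
  refine differentiableOn_pi.mpr fun i => differentiableOn_pi.mpr fun j => ?_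
  simp only [adjugate_apply]
  refine DifferentiableOn.matrix_det <|
    differentiableOn_pi.mpr fun k => differentiableOn_pi.mpr fun l => ?_
  by_cases hk : k = j
  · simp only [updateRow_apply, if_pos hk]
    exact differentiableOn_const _
  · simp only [updateRow_apply, if_neg hk]
    exact hA.matrix_apply k l

theorem DifferentiableOn.matrix_inv (hA : DifferentiableOn 𝕜 A s)
    (hunit : ∀ x ∈ s, IsUnit (A x)) : DifferentiableOn 𝕜 (fun x => (A x)⁻¹) s := by
  have hdet (x : E) (hx : x ∈ s) : (A x).det ≠ 0 :=
    ((isUnit_iff_isUnit_det _).mp (hunit x hx)).ne_zero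
  have : DifferentiableOn 𝕜 (fun x => ((A x).det)⁻¹ • (A x).adjugate) s :=
    (hA.matrix_det.inv hdet).smul hA.matrix_adjugate
  refine this.congr fun x _ => ?_
  rw [inv_def, Ring.inverse_eq_inv]

end Differentiability

section CircleAverage

variable {c : ℂ} {R : ℝ}

theorem DiffContOnCl.continuousOn_sphere {E : Type*} [NormedAddCommGroup E] [NormedSpace ℂ E]
    {f : ℂ → E} (hf : DiffContOnCl ℂ f (ball c R)) : ContinuousOn f (sphere c R) := by
  rcases eq_or_ne R 0 with rfl | hR
  · simp [continuousOn_singleton]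
  · exact hf.continuousOn.mono (frontier_ball c hR ▸ frontier_subset_closure)

variable {E : Type*} [NormedAddCommGroup E] [InnerProductSpace ℂ E] [CompleteSpace E]
  {f : ℂ → E}

theorem DiffContOnCl.sq_norm_le_circleAverage (hf : DiffContOnCl ℂ f (ball c |R|)) :
    ‖f c‖ ^ 2 ≤ Real.circleAverage (fun z => ‖f z‖ ^ 2) c R := by
  have hcont := hf.continuousOn_sphere
  set a := f c
  let L : E →L[ℝ] ℝ := (2 : ℝ) • RCLike.reCLM.comp ((innerSL ℂ a).restrictScalars ℝ)
  have hL_le (x : E) : L x ≤ ‖a‖ ^ 2 + ‖x‖ ^ 2 := by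
    change 2 * RCLike.re (inner ℂ a x) ≤ _
    linarith [norm_sub_sq (𝕜 := ℂ) a x, sq_nonneg ‖a - x‖]
  have hLa : L a = 2 * ‖a‖ ^ 2 := by
    simp [L, inner_self_eq_norm_sq_to_K, ← Complex.ofReal_pow]
  have hsq_int : CircleIntegrable (fun z => ‖f z‖ ^ 2) c R :=
    (hcont.norm.pow 2).circleIntegrable'
  have hmono : Real.circleAverage (L ∘ f) c R
      ≤ Real.circleAverage (fun z => ‖a‖ ^ 2 + ‖f z‖ ^ 2) c R :=
    circleAverage_mono (L.continuous.comp_continuousOn hcont).circleIntegrable'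
      (circleIntegrable_const _ _ _ |>.add hsq_int) fun z _ => hL_le (f z)
  rw [L.circleAverage_comp_comm hcont.circleIntegrable', hf.circleAverage, hLa,
    circleAverage_fun_add (circleIntegrable_const _ _ _) hsq_int, circleAverage_const] at hmono
  linarith

theorem DiffContOnCl.re_trace_conjTranspose_mul_self_le_circleAverage {m n : Type*} [Fintype m]
    [Fintype n] {A : ℂ → Matrix m n ℂ} (hA : DiffContOnCl ℂ A (ball c |R|)) :
    ((A c)ᴴ * A c).trace.re ≤ Real.circleAverage (fun z => ((A z)ᴴ * A z).trace.re) c R := by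
  have hentry (ij : m × n) : DiffContOnCl ℂ (fun z => A z ij.1 ij.2) (ball c |R|) :=
    ⟨hA.differentiableOn.matrix_apply ij.1 ij.2,
      continuousOn_pi.mp (continuousOn_pi.mp hA.continuousOn ij.1) ij.2⟩
  simp only [← RCLike.re_to_complex, re_trace_conjTranspose_mul_self, ← Fintype.sum_prod_type']
  rw [circleAverage_fun_sum (f := fun ij z => ‖A z ij.1 ij.2‖ ^ 2) fun ij _ =>
    ((hentry ij).continuousOn_sphere.norm.pow 2).circleIntegrable']
  exact Finset.sum_le_sum fun ij _ => (hentry ij).sq_norm_le_circleAverage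

end CircleAverage

theorem trace_plus_trace_inv_subharmonic_general
    {n : ℕ} (U : Set ℂ)
    (p : ℂ → Matrix (Fin n) (Fin n) ℂ)
    (hhol : DifferentiableOn ℂ p U)
    (hinv : ∀ z ∈ U, IsUnit (p z)) :
    ∀ c ∈ U, ∀ R : ℝ, 0 < R → closedBall c R ⊆ U →
      (Matrix.trace ((p c)ᴴ * p c)).re + (Matrix.trace (((p c)ᴴ * p c)⁻¹)).re ≤
        (1 / (2 * π)) * ∫ θ in (0:ℝ)..(2 * π),
          ((Matrix.trace ((p (c + R * Complex.exp (θ * Complex.I)))ᴴ *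
              p (c + R * Complex.exp (θ * Complex.I)))).re +
            (Matrix.trace (((p (c + R * Complex.exp (θ * Complex.I)))ᴴ *
              p (c + R * Complex.exp (θ * Complex.I)))⁻¹)).re) := by
  intro c _ R hR hball
  rw [← abs_of_pos hR] at hball
  have hp := hhol.diffContOnCl_ball hball
  have hpinv := (hhol.matrix_inv hinv).diffContOnCl_ball hball
  have hcont : Continuous fun M : Matrix (Fin n) (Fin n) ℂ => (Mᴴ * M).trace.re := by fun_prop
  have hint {A : ℂ → Matrix (Fin n) (Fin n) ℂ} (hA : DiffContOnCl ℂ A (ball c |R|)) :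
      CircleIntegrable (fun z => ((A z)ᴴ * A z).trace.re) c R :=
    (hcont.comp_continuousOn hA.continuousOn_sphere).circleIntegrable'
  have key := add_le_add hp.re_trace_conjTranspose_mul_self_le_circleAverage
    hpinv.re_trace_conjTranspose_mul_self_le_circleAverage
  rw [← circleAverage_fun_add (hint hp) (hint hpinv)] at key
  simpa only [trace_inv_conjTranspose_mul_self, circleAverage_def, smul_eq_mul, one_div,
    circleMap] using key

/-- For a holomorphic family `p` of invertible matrices,
`φ(z) = tr(p(z)* p(z)) + tr((p(z)* p(z))⁻¹)` is subharmonic: it satisfies the sub-mean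
value inequality on every closed disk contained in the domain. -/
theorem trace_plus_trace_inv_subharmonic
    {n : ℕ} (hn : 1 ≤ n) (U : Set ℂ) (hU : IsOpen U)
    (p : ℂ → Matrix (Fin n) (Fin n) ℂ)
    (hhol : DifferentiableOn ℂ p U)
    (hinv : ∀ z ∈ U, IsUnit (p z)) :
    ∀ c ∈ U, ∀ R : ℝ, 0 < R → closedBall c R ⊆ U →
      (Matrix.trace ((p c)ᴴ * p c)).re + (Matrix.trace (((p c)ᴴ * p c)⁻¹)).re ≤
        (1 / (2 * π)) * ∫ θ in (0:ℝ)..(2 * π),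
          ((Matrix.trace ((p (c + R * Complex.exp (θ * Complex.I)))ᴴ *
              p (c + R * Complex.exp (θ * Complex.I)))).re +
            (Matrix.trace (((p (c + R * Complex.exp (θ * Complex.I)))ᴴ *
              p (c + R * Complex.exp (θ * Complex.I)))⁻¹)).re) :=
  trace_plus_trace_inv_subharmonic_general U p hhol hinv
end

section
/- For η : ℂ → M_n(ℂ) holomorphic on an open neighborhood of the closed unit disk, the contour integral of tr(η(z)* η'(z)) over the unit circle equals 2i times the area integral of tr(η'(z)* η'(z)) over the open unit disk: ∮_{|z|=1} tr(η(z)* η'(z)) dz = 2i ∫_{{z : |z| < 1}} tr(η'(z)* η'(z)) dA(z), where dA is two-dimensional Lebesgue measure. In particular the contour integral is 2i times a nonnegative real number. -/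
/-!
Put `G = tr(η* η')`. Writing `G dz` in polar coordinates `z = ρ e^{iθ}`, the divergence theorem on
the rectangle `[0, 1] × [0, 2π]` becomes Green's formula `∮ G dz = 2i ∬ ∂G/∂z̄ dA`. Since `η*` is
antiholomorphic and `η'` holomorphic, only the first factor is hit by `∂/∂z̄`, so
`∂G/∂z̄ = tr(η'* η')`, the trace of a positive semidefinite matrix.
-/

attribute [local instance] Matrix.normedAddCommGroup Matrix.normedSpace

open Matrix Metric Real MeasureTheory Set ComplexConjugate
open Complex (I)

/-- The Wirtinger derivative `∂/∂z̄`: if `L v = a v + b v̄`, then `dbar L = b`. -/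
noncomputable def dbar (L : ℂ →L[ℝ] ℂ) : ℂ := (L 1 + I * L I) / 2

theorem I_mul_sub_apply_I_mul (L : ℂ →L[ℝ] ℂ) (w : ℂ) :
    I * L w - L (I * w) = 2 * I * conj w * dbar L := by
  have hw : L w = w.re • L 1 + w.im • L I := by
    rw [← map_smul, ← map_smul, ← map_add]; congr 1; apply Complex.ext <;> simp
  have hIw : L (I * w) = w.re • L I - w.im • L 1 := by
    rw [← map_smul, ← map_smul, ← map_sub]; congr 1; apply Complex.ext <;> simp
  have hconj : conj w = w.re - w.im * I := by apply Complex.ext <;> simp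
  rw [hw, hIw, hconj, dbar]
  simp only [Complex.real_smul]
  linear_combination ((w.im : ℂ) * L 1 - w.re * L I + I * w.im * L I) * Complex.I_sq

theorem dbar_smul_conj_add_smul_one (a b : ℂ) :
    dbar (a • (Complex.conjCLE : ℂ →L[ℝ] ℂ) + b • 1) = a := by
  simp only [dbar, _root_.add_apply, _root_.smul_apply, ContinuousLinearEquiv.coe_coe,
    ContinuousAlgEquiv.coeCLE_apply, Complex.conjCAE_apply, map_one, smul_eq_mul, mul_one,
    one_apply_eq_self, Complex.conj_I, mul_neg]
  linear_combination ((b - a) / 2) * Complex.I_sq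

theorem polarCoord_symm_eq_circleMap (p : ℝ × ℝ) :
    Complex.polarCoord.symm p = circleMap 0 p.1 p.2 := by
  simp [circleMap_zero, Complex.exp_mul_I]

theorem integral_ball_eq_integral_circleMap {E : Type*} [NormedAddCommGroup E] [NormedSpace ℝ E]
    {F : ℂ → E} {R : ℝ} (hR : 0 ≤ R) (hF : ContinuousOn F (closedBall 0 R)) :
    ∫ z in ball (0 : ℂ) R, F z = ∫ ρ in 0..R, ∫ θ in 0..2 * π, ρ • F (circleMap 0 ρ θ) := by
  set φ : ℝ × ℝ → ℂ := fun p => circleMap 0 p.1 p.2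
  have hφ : Continuous φ := by fun_prop
  have htarget : polarCoord.target ∩ φ ⁻¹' ball 0 R = Ioo 0 R ×ˢ Ioo (-π) π := by
    ext ⟨ρ, θ⟩
    simp only [polarCoord_target, mem_inter_iff, mem_prod, mem_Ioi, mem_Ioo, mem_preimage,
      mem_ball_zero_iff, φ, norm_circleMap_zero]
    constructor
    · rintro ⟨⟨hρ, hθ⟩, hρR⟩; exact ⟨⟨hρ, (abs_of_pos hρ) ▸ hρR⟩, hθ⟩
    · rintro ⟨⟨hρ, hρR⟩, hθ⟩; exact ⟨⟨hρ, hθ⟩, (abs_of_pos hρ).symm ▸ hρR⟩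
  have hint : IntegrableOn (fun p : ℝ × ℝ => p.1 • F (φ p)) (Ioo 0 R ×ˢ Ioo (-π) π) := by
    refine ContinuousOn.integrableOn_compact (isCompact_Icc.prod isCompact_Icc) ?_
      |>.mono_set (prod_mono Ioo_subset_Icc_self Ioo_subset_Icc_self)
    refine continuous_fst.continuousOn.smul (hF.comp hφ.continuousOn ?_)
    rintro ⟨ρ, θ⟩ ⟨hρ, -⟩
    simp [φ, abs_of_nonneg hρ.1, hρ.2]
  calc ∫ z in ball (0 : ℂ) R, F z
      = ∫ p in polarCoord.target, p.1 • (ball 0 R).indicator F (φ p) := by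
        rw [← integral_indicator measurableSet_ball, ← Complex.integral_comp_polarCoord_symm]
        simp_rw [polarCoord_symm_eq_circleMap]; rfl
    _ = ∫ p in polarCoord.target ∩ φ ⁻¹' ball 0 R, p.1 • F (φ p) := by
        rw [← setIntegral_indicator (measurableSet_ball.preimage hφ.measurable)]
        congr 1 with p
        by_cases hp : φ p ∈ ball 0 R <;> simp [hp]
    _ = ∫ ρ in Ioo 0 R, ∫ θ in Ioo (-π) π, ρ • F (circleMap 0 ρ θ) := by
        rw [htarget, Measure.volume_eq_prod, setIntegral_prod _ (by rwa [← Measure.volume_eq_prod])]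
    _ = ∫ ρ in 0..R, ∫ θ in -π..π, ρ • F (circleMap 0 ρ θ) := by
        simp only [intervalIntegral.integral_of_le hR,
          intervalIntegral.integral_of_le (neg_le_self pi_pos.le),
          setIntegral_congr_set Ioo_ae_eq_Ioc]
    _ = ∫ ρ in 0..R, ∫ θ in 0..2 * π, ρ • F (circleMap 0 ρ θ) := by
        congr 1 with ρ
        have hper := (periodic_circleMap 0 ρ).comp (fun z => ρ • F z)
        simpa [two_mul] using hper.intervalIntegral_add_eq (-π) 0

theorem hasDerivAt_circleMap_radius (θ ρ : ℝ) :
    HasDerivAt (fun r : ℝ => circleMap 0 r θ) (circleMap 0 1 θ) ρ := by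
  simp only [circleMap_zero, Complex.ofReal_one, one_mul]
  simpa using (hasDerivAt_id ρ).ofReal_comp.mul_const (Complex.exp (θ * I))

theorem HasFDerivAt.hasDerivAt_fst {E : Type*} [NormedAddCommGroup E] [NormedSpace ℝ E]
    {f : ℝ × ℝ → E} {f' : ℝ × ℝ →L[ℝ] E} {x y : ℝ} (hf : HasFDerivAt f f' (x, y)) :
    HasDerivAt (fun t => f (t, y)) (f' (1, 0)) x :=
  hf.comp_hasDerivAt x ((hasDerivAt_id x).prodMk (hasDerivAt_const x y))

theorem HasFDerivAt.hasDerivAt_snd {E : Type*} [NormedAddCommGroup E] [NormedSpace ℝ E]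
    {f : ℝ × ℝ → E} {f' : ℝ × ℝ →L[ℝ] E} {x y : ℝ} (hf : HasFDerivAt f f' (x, y)) :
    HasDerivAt (fun t => f (x, t)) (f' (0, 1)) y :=
  hf.comp_hasDerivAt y ((hasDerivAt_const y x).prodMk (hasDerivAt_id y))

theorem differentiable_circleMap_zero_uncurry :
    Differentiable ℝ (fun p : ℝ × ℝ => circleMap 0 p.1 p.2) := by
  simp only [circleMap_zero]; fun_prop

section Green

variable {G : ℂ → ℂ}

/-- In polar coordinates `z = ρ e^{iθ}` one has `G dz = G e^{iθ} dρ + G i z dθ`; these are the two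
coefficients, so the divergence theorem for `(polarFormDTheta G, -polarFormDRho G)` on
`[0, R] × [0, 2π]` is Green's formula for `G dz`. -/
noncomputable def polarFormDTheta (G : ℂ → ℂ) (p : ℝ × ℝ) : ℂ :=
  circleMap 0 p.1 p.2 * I * G (circleMap 0 p.1 p.2)

noncomputable def polarFormDRho (G : ℂ → ℂ) (p : ℝ × ℝ) : ℂ :=
  circleMap 0 1 p.2 * G (circleMap 0 p.1 p.2)

theorem differentiableAt_polarFormDTheta {p : ℝ × ℝ}
    (hG : DifferentiableAt ℝ G (circleMap 0 p.1 p.2)) :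
    DifferentiableAt ℝ (polarFormDTheta G) p := by
  have hφ := differentiable_circleMap_zero_uncurry p
  exact (hφ.mul_const I).mul (hG.comp p hφ)

theorem differentiableAt_polarFormDRho {p : ℝ × ℝ}
    (hG : DifferentiableAt ℝ G (circleMap 0 p.1 p.2)) :
    DifferentiableAt ℝ (polarFormDRho G) p := by
  have hφ := differentiable_circleMap_zero_uncurry p
  exact ((differentiable_circleMap 0 1 p.2).comp p differentiableAt_snd).mul (hG.comp p hφ)

theorem fderiv_polarFormDTheta_sub_fderiv_polarFormDRho {L : ℂ →L[ℝ] ℂ} {ρ θ : ℝ}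
    (hG : HasFDerivAt G L (circleMap 0 ρ θ)) :
    fderiv ℝ (polarFormDTheta G) (ρ, θ) (1, 0) - fderiv ℝ (polarFormDRho G) (ρ, θ) (0, 1) =
      2 * I * ρ * dbar L := by
  set e := circleMap 0 1 θ
  set z := circleMap 0 ρ θ
  have hradial : HasDerivAt (fun r => polarFormDTheta G (r, θ))
      (e * I * G z + z * I * L e) ρ := by
    have h := hasDerivAt_circleMap_radius θ ρ
    exact (h.mul_const I).mul (hG.comp_hasDerivAt ρ h)
  have hangular : HasDerivAt (fun t => polarFormDRho G (ρ, t))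
      (e * I * G z + e * L (z * I)) θ := by
    have h := hasDerivAt_circleMap 0 ρ θ
    exact ((hasDerivAt_circleMap 0 1 θ).mul (hG.comp_hasDerivAt θ h)).congr_deriv
      (by simp [e, z, circleMap_zero])
  have h1 := (differentiableAt_polarFormDTheta (p := (ρ, θ)) hG.differentiableAt).hasFDerivAt
  have h2 := (differentiableAt_polarFormDRho (p := (ρ, θ)) hG.differentiableAt).hasFDerivAt
  rw [h1.hasDerivAt_fst.unique hradial, h2.hasDerivAt_snd.unique hangular]
  have hz : z = ρ * e := by simp [z, e, circleMap_zero]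
  have hLz : L (z * I) = ρ * L (I * e) := by
    rw [hz, mul_comm _ I, mul_left_comm, ← Complex.real_smul, map_smul, Complex.real_smul]
  have hee : conj e * e = 1 := by
    simp [e, circleMap_zero, ← Complex.normSq_eq_conj_mul_self, Complex.normSq_eq_norm_sq]
  calc _ = ρ * e * (I * L e - L (I * e)) := by rw [hLz, hz]; ring
    _ = _ := by rw [I_mul_sub_apply_I_mul]; linear_combination (2 * I * ρ * dbar L) * hee

theorem circleIntegral_eq_two_mul_I_mul_integral_dbar {G' : ℂ → ℂ →L[ℝ] ℂ} {R : ℝ} (hR : 0 ≤ R)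
    (hG : ∀ z ∈ closedBall (0 : ℂ) R, HasFDerivAt G (G' z) z)
    (hG' : ContinuousOn (fun z => dbar (G' z)) (closedBall 0 R)) :
    (∮ z in C(0, R), G z) = 2 * I * ∫ z in ball (0 : ℂ) R, dbar (G' z) := by
  set f := polarFormDTheta G
  set g := fun p => -polarFormDRho G p
  set S := uIcc 0 R ×ˢ uIcc 0 (2 * π)
  have hmem : ∀ p ∈ S, circleMap 0 p.1 p.2 ∈ closedBall 0 R := by
    rintro ⟨ρ, θ⟩ ⟨hρ, -⟩
    rw [uIcc_of_le hR] at hρ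
    simp [abs_of_nonneg hρ.1, hρ.2]
  have hf : ∀ p ∈ S, DifferentiableAt ℝ f p := fun p hp =>
    differentiableAt_polarFormDTheta (hG _ (hmem p hp)).differentiableAt
  have hg : ∀ p ∈ S, DifferentiableAt ℝ g p := fun p hp =>
    (differentiableAt_polarFormDRho (hG _ (hmem p hp)).differentiableAt).neg
  have hdiv : EqOn (fun p => fderiv ℝ f p (1, 0) + fderiv ℝ g p (0, 1))
      (fun p => 2 * I * (p.1 • dbar (G' (circleMap 0 p.1 p.2)))) S := by
    rintro ⟨ρ, θ⟩ hp
    simp only [f, g, fderiv_fun_neg, _root_.neg_apply, ← sub_eq_add_neg,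
      fderiv_polarFormDTheta_sub_fderiv_polarFormDRho (hG _ (hmem _ hp)), Complex.real_smul]
    ring
  have hinterior : Ioo (min 0 R) (max 0 R) ×ˢ Ioo (min 0 (2 * π)) (max 0 (2 * π)) \ ∅ ⊆ S :=
    fun p hp => prod_mono Ioo_subset_Icc_self Ioo_subset_Icc_self hp.1
  have hint : IntegrableOn (fun p => fderiv ℝ f p (1, 0) + fderiv ℝ g p (0, 1)) S := by
    refine (ContinuousOn.integrableOn_compact (isCompact_uIcc.prod isCompact_uIcc) ?_).congr_fun
      hdiv.symm (measurableSet_uIcc.prod measurableSet_uIcc)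
    exact continuousOn_const.mul (continuous_fst.continuousOn.smul
      (hG'.comp differentiable_circleMap_zero_uncurry.continuous.continuousOn hmem))
  have hdivergence := integral2_divergence_prod_of_hasFDerivAt_off_countable f g
    (fderiv ℝ f) (fderiv ℝ g) 0 0 R (2 * π) ∅ countable_empty
    (fun p hp => (hf p hp).continuousAt.continuousWithinAt)
    (fun p hp => (hg p hp).continuousAt.continuousWithinAt)
    (fun p hp => (hf p (hinterior hp)).hasFDerivAt)
    (fun p hp => (hg p (hinterior hp)).hasFDerivAt) hint
  have hg_periodic : ∀ ρ, g (ρ, 2 * π) = g (ρ, 0) := fun ρ => by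
    simp only [g, polarFormDRho, (periodic_circleMap 0 _).eq]
  have hf_center : ∀ θ, f (0, θ) = 0 := fun θ => by simp [f, polarFormDTheta]
  calc (∮ z in C(0, R), G z) = ∫ θ in 0..2 * π, f (R, θ) := by
        simp only [circleIntegral, deriv_circleMap, f, polarFormDTheta, smul_eq_mul]
    _ = ∫ ρ in 0..R, ∫ θ in 0..2 * π, fderiv ℝ f (ρ, θ) (1, 0) + fderiv ℝ g (ρ, θ) (0, 1) := by
        simp [hdivergence, hg_periodic, hf_center]
    _ = ∫ ρ in 0..R, ∫ θ in 0..2 * π, 2 * I * (ρ • dbar (G' (circleMap 0 ρ θ))) :=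
        intervalIntegral.integral_congr fun ρ hρ =>
          intervalIntegral.integral_congr fun θ hθ => hdiv ⟨hρ, hθ⟩
    _ = 2 * I * ∫ z in ball (0 : ℂ) R, dbar (G' z) := by
        simp only [intervalIntegral.integral_const_mul, integral_ball_eq_integral_circleMap hR hG']

end Green

section Matrix

variable {z : ℂ}

theorem HasDerivAt.hasFDerivAt_conj_mul {a b : ℂ → ℂ} {a' b' : ℂ} (ha : HasDerivAt a a' z)
    (hb : HasDerivAt b b' z) :
    HasFDerivAt (fun w => conj (a w) * b w)
      ((conj a' * b z) • (Complex.conjCLE : ℂ →L[ℝ] ℂ) + (conj (a z) * b') • 1) z := by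
  have hconj := (Complex.conjCLE.toContinuousLinearMap.hasFDerivAt (x := a z)).comp z
    (ha.hasFDerivAt.restrictScalars ℝ)
  refine (hconj.mul (hb.hasFDerivAt.restrictScalars ℝ)).congr_fderiv ?_
  ext v
  simp only [ContinuousLinearEquiv.coe_coe, ContinuousAlgEquiv.coe_coeCLE, Function.comp_apply,
    Complex.conjCAE_apply, _root_.add_apply, _root_.smul_apply,
    ContinuousLinearMap.coe_restrictScalars', ContinuousLinearMap.toSpanSingleton_apply,
    smul_eq_mul, ContinuousLinearMap.comp_apply, ContinuousAlgEquiv.coeCLE_apply, map_mul,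
    one_apply_eq_self]
  ring

theorem HasDerivAt.hasFDerivAt_star_dotProduct {ι : Type*} [Fintype ι] {a b : ℂ → ι → ℂ}
    {a' b' : ι → ℂ} (ha : HasDerivAt a a' z) (hb : HasDerivAt b b' z) :
    HasFDerivAt (fun w => star (a w) ⬝ᵥ b w)
      ((star a' ⬝ᵥ b z) • (Complex.conjCLE : ℂ →L[ℝ] ℂ) + (star (a z) ⬝ᵥ b') • 1) z := by
  have hsum := HasFDerivAt.sum (u := Finset.univ) fun i _ =>
    (hasDerivAt_pi.1 ha i).hasFDerivAt_conj_mul (hasDerivAt_pi.1 hb i)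
  refine (hsum.congr_fderiv ?_).congr_of_eventuallyEq ?_
  · refine ContinuousLinearMap.ext fun v => ?_
    simp [dotProduct, Finset.sum_add_distrib, Finset.sum_mul]
  · exact Filter.Eventually.of_forall fun w => by simp [dotProduct]

theorem HasDerivAt.vec {m n : Type*} [Fintype m] [Fintype n] {A : ℂ → Matrix m n ℂ}
    {A' : Matrix m n ℂ} (hA : HasDerivAt A A' z) : HasDerivAt (fun w => vec (A w)) (vec A') z :=
  hasDerivAt_pi.2 fun p => hasDerivAt_pi.1 (hasDerivAt_pi.1 hA p.2) p.1

theorem HasDerivAt.hasFDerivAt_trace_conjTranspose_mul {m n : Type*} [Fintype m] [Fintype n]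
    {A B : ℂ → Matrix m n ℂ} {A' B' : Matrix m n ℂ} (hA : HasDerivAt A A' z)
    (hB : HasDerivAt B B' z) :
    HasFDerivAt (fun w => trace ((A w)ᴴ * B w))
      (trace (A'ᴴ * B z) • (Complex.conjCLE : ℂ →L[ℝ] ℂ) + trace ((A z)ᴴ * B') • 1) z := by
  simp only [← star_vec_dotProduct_vec]
  exact hA.vec.hasFDerivAt_star_dotProduct hB.vec

end Matrix

theorem circleIntegral_zero_one_eq (f : ℂ → ℂ) :
    (∮ z in C(0, 1), f z) =
      ∫ θ in 0..2 * π, f (Complex.exp (θ * I)) * (I * Complex.exp (θ * I)) := by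
  simp only [circleIntegral, deriv_circleMap, circleMap_zero, Complex.ofReal_one, one_mul,
    smul_eq_mul, mul_comm _ I, mul_comm (f _)]

open scoped ComplexOrder in
theorem contour_integral_eq_energy_general
    {n : ℕ} (U : Set ℂ) (hU : IsOpen U)
    (hU1 : closedBall (0 : ℂ) 1 ⊆ U)
    (η : ℂ → Matrix (Fin n) (Fin n) ℂ)
    (hhol : DifferentiableOn ℂ η U) :
    (∫ θ in (0:ℝ)..(2 * π),
        Matrix.trace ((η (Complex.exp (θ * Complex.I)))ᴴ * deriv η (Complex.exp (θ * Complex.I))) *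
          (Complex.I * Complex.exp (θ * Complex.I))) =
      2 * Complex.I * ∫ z in ball (0 : ℂ) 1, Matrix.trace ((deriv η z)ᴴ * deriv η z) ∧
    ∃ r : ℝ, 0 ≤ r ∧
      (∫ θ in (0:ℝ)..(2 * π),
        Matrix.trace ((η (Complex.exp (θ * Complex.I)))ᴴ * deriv η (Complex.exp (θ * Complex.I))) *
          (Complex.I * Complex.exp (θ * Complex.I))) = 2 * Complex.I * (r : ℂ) := by
  have hη : AnalyticOnNhd ℂ η U := hhol.analyticOnNhd hU
  have hG : ∀ z ∈ closedBall (0 : ℂ) 1, HasFDerivAt (fun w => trace ((η w)ᴴ * deriv η w))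
      (trace ((deriv η z)ᴴ * deriv η z) • (Complex.conjCLE : ℂ →L[ℝ] ℂ) +
        trace ((η z)ᴴ * deriv (deriv η) z) • 1) z := fun z hz =>
    (hη z (hU1 hz)).differentiableAt.hasDerivAt.hasFDerivAt_trace_conjTranspose_mul
      (hη.deriv z (hU1 hz)).differentiableAt.hasDerivAt
  have henergy : ContinuousOn (fun z => trace ((deriv η z)ᴴ * deriv η z)) (closedBall 0 1) :=
    (by fun_prop : Continuous fun M : Matrix (Fin n) (Fin n) ℂ => trace (Mᴴ * M)).comp_continuousOn
      (hη.deriv.continuousOn.mono hU1)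
  have hgreen := circleIntegral_eq_two_mul_I_mul_integral_dbar zero_le_one hG
    (by simpa only [dbar_smul_conj_add_smul_one] using henergy)
  simp only [dbar_smul_conj_add_smul_one, circleIntegral_zero_one_eq] at hgreen
  have hnonneg : 0 ≤ ∫ z in ball (0 : ℂ) 1, trace ((deriv η z)ᴴ * deriv η z) :=
    integral_nonneg fun z => (posSemidef_conjTranspose_mul_self _).trace_nonneg
  exact ⟨hgreen, _, (Complex.nonneg_iff.1 hnonneg).1,
    hgreen.trans (congrArg _ (Complex.eq_re_of_ofReal_le hnonneg))⟩

/-- For `η` holomorphic near the closed unit disk, the contour integral of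
`tr(η* η')` over the unit circle equals `2i` times the area integral of `tr(η'* η')` over
the open unit disk, hence equals `2i` times a nonnegative real number.  This is the
Stokes-theorem identity identifying the instanton charge with the degree. -/
theorem contour_integral_eq_energy
    {n : ℕ} (hn : 1 ≤ n) (U : Set ℂ) (hU : IsOpen U)
    (hU1 : closedBall (0 : ℂ) 1 ⊆ U)
    (η : ℂ → Matrix (Fin n) (Fin n) ℂ)
    (hhol : DifferentiableOn ℂ η U) :
    (∫ θ in (0:ℝ)..(2 * π),
        Matrix.trace ((η (Complex.exp (θ * Complex.I)))ᴴ * deriv η (Complex.exp (θ * Complex.I))) *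
          (Complex.I * Complex.exp (θ * Complex.I))) =
      2 * Complex.I * ∫ z in ball (0 : ℂ) 1, Matrix.trace ((deriv η z)ᴴ * deriv η z) ∧
    ∃ r : ℝ, 0 ≤ r ∧
      (∫ θ in (0:ℝ)..(2 * π),
        Matrix.trace ((η (Complex.exp (θ * Complex.I)))ᴴ * deriv η (Complex.exp (θ * Complex.I))) *
          (Complex.I * Complex.exp (θ * Complex.I))) = 2 * Complex.I * (r : ℂ) :=
  contour_integral_eq_energy_general U hU hU1 η hhol
end

section
/- Define G : (0,1) × (0,1) → ℝ by G(r,s) = min{−log r, −log s} / (s (log s)²). Then: (i) for every r ∈ (0,1) the function s ↦ (1 − s) G(r,s) is Lebesgue integrable on (0,1); (ii) there exists a constant C > 0 such that for every r ∈ (0, 1/2], ∫₀¹ (1 − s) G(r,s) ds ≤ C · log(1 − log r); and (iii) ∫₀¹ (1 − s) G(r,s) ds tends to 0 as r → 1⁻. -/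
/-!
For `s ≤ r` the integrand is at most `-log r / (s (log s)²)`, and the primitive `(-log s)⁻¹`
gives this majorant mass exactly `1` on `(0, r)`. For `s ≥ r` it equals `(1 - s) / (s (-log s))`,
which is at most `2 / (s (1 - log s))` because `-log s ≥ 1 - s`; as `-log (1 - log s)` is a
primitive of `1 / (s (1 - log s))`, this majorant has mass `2 log (1 - log r)` on `(r, 1)`.
Hence the integral is at most `1 + 2 log (1 - log r)`, and `1 ≤ 3 log (1 - log r)` once
`r ≤ 1/2`. As `r → 1⁻`, `G(r, ·)` decreases to `0` pointwise under the integrable majorant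
`(1 - s) G(1/2, s)`, so dominated convergence gives (iii).
-/

open MeasureTheory Set

/-- The Green's function of the reduced one-dimensional Laplacian on the punctured disk:
`G(r,s) = min{−log r, −log s} / (s (log s)²)`. -/
noncomputable def greenG (r s : ℝ) : ℝ :=
  min (-Real.log r) (-Real.log s) / (s * (Real.log s) ^ 2)

open Filter Topology Real

theorem integrableOn_and_integral_Ioo_deriv_of_nonneg {f f' : ℝ → ℝ} {a b : ℝ}
    (hab : a ≤ b) (hcont : ContinuousOn f (Icc a b))
    (hderiv : ∀ x ∈ Ioo a b, HasDerivAt f (f' x) x) (hpos : ∀ x ∈ Ioo a b, 0 ≤ f' x) :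
    IntegrableOn f' (Ioo a b) ∧ ∫ x in Ioo a b, f' x = f b - f a := by
  have hint : IntegrableOn f' (Ioc a b) :=
    intervalIntegral.integrableOn_deriv_of_nonneg hcont hderiv hpos
  refine ⟨hint.mono_set Ioo_subset_Ioc_self, ?_⟩
  rw [← integral_Ioc_eq_integral_Ioo, ← intervalIntegral.integral_of_le hab]
  exact intervalIntegral.integral_eq_sub_of_hasDerivAt_of_le hab hcont hderiv
    ((intervalIntegrable_iff_integrableOn_Ioc_of_le hab).2 hint)

theorem integrableOn_and_setIntegral_le_of_nonneg_of_le {α : Type*} [MeasurableSpace α]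
    {μ : Measure α} {f g : α → ℝ} {s : Set α} (hs : MeasurableSet s)
    (hf : AEStronglyMeasurable f (μ.restrict s)) (hg : IntegrableOn g s μ)
    (hf_nonneg : ∀ x ∈ s, 0 ≤ f x) (hfg : ∀ x ∈ s, f x ≤ g x) :
    IntegrableOn f s μ ∧ ∫ x in s, f x ∂μ ≤ ∫ x in s, g x ∂μ := by
  have hint : IntegrableOn f s μ := by
    refine hg.mono' hf ?_
    filter_upwards [ae_restrict_mem hs] with x hx
    rw [norm_of_nonneg (hf_nonneg x hx)]
    exact hfg x hx
  exact ⟨hint, setIntegral_mono_on hint hg hs hfg⟩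

theorem hasDerivAt_inv_neg_log {s : ℝ} (hs : s ≠ 0) (hlog : log s ≠ 0) :
    HasDerivAt (fun s => (-log s)⁻¹) (s * log s ^ 2)⁻¹ s := by
  refine ((hasDerivAt_log hs).fun_neg.fun_inv (neg_ne_zero.2 hlog)).congr_deriv ?_
  field_simp

theorem hasDerivAt_neg_log_one_sub_log {s : ℝ} (hs : s ≠ 0) (hlog : log s ≠ 1) :
    HasDerivAt (fun s => -log (1 - log s)) (s * (1 - log s))⁻¹ s := by
  refine (((hasDerivAt_log hs).const_sub 1).log (sub_ne_zero.2 hlog.symm)).fun_neg.congr_deriv ?_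
  field_simp

theorem continuousAt_inv_neg_log_zero : ContinuousAt (fun s => (-log s)⁻¹) 0 := by
  rw [← continuousWithinAt_compl_self, ContinuousWithinAt]
  simpa [Function.comp_def, Pi.inv_def] using
    (tendsto_neg_atBot_atTop.comp tendsto_log_nhdsNE_zero).inv_tendsto_atTop

theorem integrableOn_and_integral_inv_mul_log_sq {c : ℝ} (hc0 : 0 < c) (hc1 : c < 1) :
    IntegrableOn (fun s => (s * log s ^ 2)⁻¹) (Ioo 0 c) ∧
      ∫ s in Ioo 0 c, (s * log s ^ 2)⁻¹ = (-log c)⁻¹ := by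
  have hlog : ∀ x ∈ Ioc 0 c, log x ≠ 0 := fun x hx => (log_neg hx.1 (hx.2.trans_lt hc1)).ne
  have hcont : ContinuousOn (fun s => (-log s)⁻¹) (Icc 0 c) := by
    intro x hx
    rcases hx.1.eq_or_lt with rfl | hx0
    · exact continuousAt_inv_neg_log_zero.continuousWithinAt
    · exact ((continuousAt_log hx0.ne').neg.inv₀
        (neg_ne_zero.2 (hlog x ⟨hx0, hx.2⟩))).continuousWithinAt
  simpa using integrableOn_and_integral_Ioo_deriv_of_nonneg hc0.le hcont
    (fun x hx => hasDerivAt_inv_neg_log hx.1.ne' (hlog x (Ioo_subset_Ioc_self hx)))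
    (fun x hx => by have := hx.1; positivity)

theorem integrableOn_and_integral_inv_mul_one_sub_log {r : ℝ} (hr0 : 0 < r) (hr1 : r ≤ 1) :
    IntegrableOn (fun s => (s * (1 - log s))⁻¹) (Ioo r 1) ∧
      ∫ s in Ioo r 1, (s * (1 - log s))⁻¹ = log (1 - log r) := by
  have hlog : ∀ x ∈ Icc r 1, 0 < 1 - log x := fun x hx => by
    linarith [log_nonpos (hr0.le.trans hx.1) hx.2]
  have hcont : ContinuousOn (fun s => -log (1 - log s)) (Icc r 1) := fun x hx =>
    ((continuousAt_const.sub (continuousAt_log (hr0.trans_le hx.1).ne')).log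
      (hlog x hx).ne').neg.continuousWithinAt
  simpa using integrableOn_and_integral_Ioo_deriv_of_nonneg hr1 hcont
    (fun x hx => hasDerivAt_neg_log_one_sub_log (hr0.trans hx.1).ne'
      (by linarith [hlog x (Ioo_subset_Icc_self hx)]))
    (fun x hx => by have := hr0.trans hx.1; have := hlog x (Ioo_subset_Icc_self hx); positivity)

theorem one_sub_mul_inv_mul_neg_log_le {s : ℝ} (hs0 : 0 < s) (hs1 : s < 1) :
    (1 - s) * (s * -log s)⁻¹ ≤ 2 * (s * (1 - log s))⁻¹ := by
  have hlog : 1 - s ≤ -log s := by linarith [log_le_sub_one_of_pos hs0]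
  have hkey : (1 - s) * (1 - log s) ≤ 2 * -log s := by nlinarith
  rw [← div_eq_mul_inv, ← div_eq_mul_inv, div_le_div_iff₀ (by nlinarith) (by nlinarith)]
  nlinarith

theorem one_le_three_mul_log_one_sub_log {r : ℝ} (hr0 : 0 < r) (hr : r ≤ 1 / 2) :
    1 ≤ 3 * log (1 - log r) := by
  have hlog2 : log (1 / 2) < -(1 / 2) := by
    rw [one_div, log_inv]; linarith [log_two_gt_d9]
  have h32 : 3 / 2 ≤ 1 - log r := by linarith [log_le_log hr0 hr]
  have hinv : (1 - log r)⁻¹ ≤ 2 / 3 := by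
    rw [inv_le_comm₀ (by linarith) (by norm_num)]; linarith
  linarith [one_sub_inv_le_log_of_pos (by linarith : 0 < 1 - log r)]

theorem greenG_nonneg {r s : ℝ} (hr0 : 0 ≤ r) (hr1 : r ≤ 1) (hs0 : 0 ≤ s) (hs1 : s ≤ 1) :
    0 ≤ greenG r s :=
  div_nonneg (le_min (neg_nonneg.2 (log_nonpos hr0 hr1)) (neg_nonneg.2 (log_nonpos hs0 hs1)))
    (by positivity)

theorem greenG_of_le {r s : ℝ} (hs : 0 < s) (hsr : s ≤ r) :
    greenG r s = -log r * (s * log s ^ 2)⁻¹ := by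
  rw [greenG, min_eq_left (neg_le_neg (log_le_log hs hsr)), div_eq_mul_inv]

theorem greenG_of_ge {r s : ℝ} (hr : 0 < r) (hrs : r ≤ s) : greenG r s = (s * -log s)⁻¹ := by
  rw [greenG, min_eq_right (neg_le_neg (log_le_log hr hrs))]
  rcases eq_or_ne (log s) 0 with hlog | hlog
  · simp [hlog]
  · field_simp

theorem greenG_le_of_le_left {r r' s : ℝ} (hr : 0 < r) (hrr' : r ≤ r') (hs : 0 ≤ s) :
    greenG r' s ≤ greenG r s :=
  div_le_div_of_nonneg_right (min_le_min_right _ (neg_le_neg (log_le_log hr hrr')))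
    (by positivity)

theorem greenG_one_left {s : ℝ} (hs0 : 0 ≤ s) (hs1 : s ≤ 1) : greenG 1 s = 0 := by
  rw [greenG, log_one, neg_zero, min_eq_left (neg_nonneg.2 (log_nonpos hs0 hs1)), zero_div]

theorem continuousAt_greenG_left {r : ℝ} (s : ℝ) (hr : r ≠ 0) :
    ContinuousAt (fun r => greenG r s) r :=
  ((continuousAt_log hr).neg.min continuousAt_const).div_const _

theorem measurable_one_sub_mul_greenG (r : ℝ) : Measurable fun s => (1 - s) * greenG r s := by
  unfold greenG
  fun_prop

theorem integrableOn_and_setIntegral_green_Ioo_zero_le {r : ℝ} (hr0 : 0 < r) (hr1 : r < 1) :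
    IntegrableOn (fun s => (1 - s) * greenG r s) (Ioo 0 r) ∧
      ∫ s in Ioo 0 r, (1 - s) * greenG r s ≤ 1 := by
  obtain ⟨hint, hval⟩ := integrableOn_and_integral_inv_mul_log_sq hr0 hr1
  have hG : ∀ s ∈ Ioo 0 r, 0 ≤ greenG r s := fun s hs =>
    greenG_nonneg hr0.le hr1.le hs.1.le (hs.2.trans hr1).le
  have hmaj := integrableOn_and_setIntegral_le_of_nonneg_of_le measurableSet_Ioo
    (measurable_one_sub_mul_greenG r).aestronglyMeasurable (hint.const_mul (-log r))
    (fun s hs => mul_nonneg (by linarith [hs.2]) (hG s hs))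
    (fun s hs => by
      rw [← greenG_of_le hs.1 hs.2.le]
      exact mul_le_of_le_one_left (hG s hs) (by linarith [hs.1]))
  rwa [integral_const_mul, hval, mul_inv_cancel₀ (neg_pos.2 (log_neg hr0 hr1)).ne'] at hmaj

theorem integrableOn_and_setIntegral_green_Ioo_one_le {r : ℝ} (hr0 : 0 < r) (hr1 : r < 1) :
    IntegrableOn (fun s => (1 - s) * greenG r s) (Ioo r 1) ∧
      ∫ s in Ioo r 1, (1 - s) * greenG r s ≤ 2 * log (1 - log r) := by
  obtain ⟨hint, hval⟩ := integrableOn_and_integral_inv_mul_one_sub_log hr0 hr1.le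
  have hmaj := integrableOn_and_setIntegral_le_of_nonneg_of_le measurableSet_Ioo
    (measurable_one_sub_mul_greenG r).aestronglyMeasurable (hint.const_mul 2)
    (fun s hs => mul_nonneg (by linarith [hs.2])
      (greenG_nonneg hr0.le hr1.le (hr0.trans hs.1).le hs.2.le))
    (fun s hs => by
      rw [greenG_of_ge hr0 hs.1.le]
      exact one_sub_mul_inv_mul_neg_log_le (hr0.trans hs.1) hs.2)
  rwa [integral_const_mul, hval] at hmaj

theorem integrableOn_and_integral_green_le {r : ℝ} (hr0 : 0 < r) (hr1 : r < 1) :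
    IntegrableOn (fun s => (1 - s) * greenG r s) (Ioo 0 1) ∧
      ∫ s in Ioo 0 1, (1 - s) * greenG r s ≤ 1 + 2 * log (1 - log r) := by
  obtain ⟨hint₁, hle₁⟩ := integrableOn_and_setIntegral_green_Ioo_zero_le hr0 hr1
  obtain ⟨hint₂, hle₂⟩ := integrableOn_and_setIntegral_green_Ioo_one_le hr0 hr1
  rw [← integrableOn_Ico_iff_integrableOn_Ioo] at hint₂
  rw [← integral_Ico_eq_integral_Ioo] at hle₂
  rw [← Ioo_union_Ico_eq_Ioo hr0 hr1.le]
  refine ⟨hint₁.union hint₂, ?_⟩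
  rw [setIntegral_union ((Iio_disjoint_Ici le_rfl).mono Ioo_subset_Iio_self Ico_subset_Ici_self)
    measurableSet_Ico hint₁ hint₂]
  linarith

theorem tendsto_integral_green_nhdsLT_one :
    Tendsto (fun r => ∫ s in Ioo 0 1, (1 - s) * greenG r s) (𝓝[<] 1) (𝓝 0) := by
  have hlim := tendsto_integral_filter_of_dominated_convergence (μ := volume.restrict (Ioo 0 1))
    (l := 𝓝[<] 1) (F := fun r s => (1 - s) * greenG r s) (f := fun _ => 0)
    (fun s => (1 - s) * greenG (1 / 2) s)
    (Eventually.of_forall fun r => (measurable_one_sub_mul_greenG r).aestronglyMeasurable)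
    ?_ (integrableOn_and_integral_green_le (r := 1 / 2) (by norm_num) (by norm_num)).1 ?_
  · simpa using hlim
  · filter_upwards [Ioo_mem_nhdsLT (show (1 / 2 : ℝ) < 1 by norm_num)] with r hr
    filter_upwards [ae_restrict_mem measurableSet_Ioo] with s hs
    have hs1 : 0 ≤ 1 - s := by linarith [hs.2]
    have hG := greenG_nonneg (by linarith [hr.1]) hr.2.le hs.1.le hs.2.le
    rw [norm_of_nonneg (mul_nonneg hs1 hG)]
    exact mul_le_mul_of_nonneg_left (greenG_le_of_le_left (by norm_num) hr.1.le hs.1.le) hs1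
  · filter_upwards [ae_restrict_mem measurableSet_Ioo] with s hs
    have hcont := ((continuousAt_greenG_left s one_ne_zero).tendsto.const_mul (1 - s)).mono_left
      (nhdsWithin_le_nhds (s := Iio 1))
    rwa [greenG_one_left hs.1.le hs.2.le, mul_zero] at hcont

/-- (i) `s ↦ (1−s) G(r,s)` is integrable on `(0,1)` for every `r ∈ (0,1)`;
(ii) there is `C > 0` with `∫₀¹ (1−s) G(r,s) ds ≤ C log(1 − log r)` for `r ∈ (0,1/2]`;
(iii) `∫₀¹ (1−s) G(r,s) ds → 0` as `r → 1⁻`. -/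
theorem green_function_estimates :
    (∀ r ∈ Ioo (0:ℝ) 1, IntegrableOn (fun s => (1 - s) * greenG r s) (Ioo (0:ℝ) 1) volume) ∧
    (∃ C : ℝ, 0 < C ∧ ∀ r ∈ Ioc (0:ℝ) (1/2),
      (∫ s in Ioo (0:ℝ) 1, (1 - s) * greenG r s) ≤ C * Real.log (1 - Real.log r)) ∧
    Filter.Tendsto (fun r : ℝ => ∫ s in Ioo (0:ℝ) 1, (1 - s) * greenG r s)
      (nhdsWithin 1 (Iio 1)) (nhds 0) := by
  refine ⟨fun r hr => (integrableOn_and_integral_green_le hr.1 hr.2).1,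
    ⟨5, by norm_num, fun r hr => ?_⟩, tendsto_integral_green_nhdsLT_one⟩
  have hle := (integrableOn_and_integral_green_le hr.1 (hr.2.trans_lt (by norm_num))).2
  linarith [one_le_three_mul_log_one_sub_log hr.1 hr.2]
end

section
/- Let φ : ℝ³ → ℝ be a smooth harmonic function (the sum of its three pure second partial derivatives vanishes identically) whose gradient is square-integrable: ∫_{ℝ³} ‖∇φ(x)‖² dx < ∞. Then φ is constant. -/
open MeasureTheory Metric Function

noncomputable section HFEC
abbrev E₃ := EuclideanSpace ℝ (Fin 3)

def e3 (i : Fin 3) : E₃ := EuclideanSpace.single i 1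

lemma e3_norm (i : Fin 3) : ‖e3 i‖ = 1 := by simp [e3]

lemma smooth_pd {f : E₃ → ℝ} (hf : ContDiff ℝ (⊤:ℕ∞) f) (v : E₃) :
    ContDiff ℝ (⊤:ℕ∞) (fun x => fderiv ℝ f x v) :=
  (hf.fderiv_right (m := (⊤:ℕ∞)) (by simp)).clm_apply contDiff_const

lemma swap_pd {f : E₃ → ℝ} (hf : ContDiff ℝ (⊤:ℕ∞) f) (x v w : E₃) :
    fderiv ℝ (fun y => fderiv ℝ f y w) x v = fderiv ℝ (fun y => fderiv ℝ f y v) x w := by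
  have hd : DifferentiableAt ℝ (fderiv ℝ f) x :=
    ((hf.fderiv_right (m := (⊤:ℕ∞)) (by simp)).differentiable (by simp)).differentiableAt
  rw [fderiv_clm_apply hd (differentiableAt_const w),
      fderiv_clm_apply hd (differentiableAt_const v)]
  simp
  exact (hf.contDiffAt.isSymmSndFDerivAt (by
    rw [show (2 : WithTop ℕ∞) = ((2:ℕ∞) : WithTop ℕ∞) from rfl]
    rw [minSmoothness_of_isRCLikeNormedField]; exact WithTop.coe_le_coe.mpr le_top)).eq v w

lemma clm_zero_of_partials (L : E₃ →L[ℝ] ℝ) (h : ∀ i, L (e3 i) = 0) : L = 0 := by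
  ext v
  have hv : ∑ i, v i • e3 i = v := by
    have := (EuclideanSpace.basisFun (Fin 3) ℝ).sum_repr v
    simpa [e3, EuclideanSpace.basisFun_apply, EuclideanSpace.basisFun_repr] using this
  have : L v = L (∑ i, v i • e3 i) := by rw [hv]
  rw [this]
  simp only [map_sum, ContinuousLinearMap.map_smul, h, smul_zero, Finset.sum_const_zero,
    ContinuousLinearMap.zero_apply]


def bmp : ContDiffBump (0 : E₃) := ⟨1, 2, one_pos, one_lt_two⟩

section cutoff
variable {R : ℝ} (hR : 0 < R)

def cut (R : ℝ) : E₃ → ℝ := fun x => bmp (R⁻¹ • x)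

include hR

omit hR in lemma cut_smooth : ContDiff ℝ (⊤:ℕ∞) (cut R) :=
  bmp.contDiff.comp (contDiff_const_smul R⁻¹)

lemma cut_zero {x : E₃} (hx : 2 * R ≤ ‖x‖) : cut R x = 0 := by
  apply bmp.zero_of_le_dist
  have : ‖R⁻¹ • x‖ = R⁻¹ * ‖x‖ := by
    rw [norm_smul, Real.norm_eq_abs, abs_of_pos (by positivity)]
  have h2 : (2:ℝ) ≤ R⁻¹ * ‖x‖ := by
    have h := mul_le_mul_of_nonneg_left hx (inv_nonneg.mpr hR.le)
    rw [show R⁻¹ * (2 * R) = 2 by field_simp] at h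
    exact h
  simpa [bmp, dist_eq_norm, this] using h2

lemma cut_hcs : HasCompactSupport (cut R) := by
  apply HasCompactSupport.intro (isCompact_closedBall (0:E₃) (2*R))
  intro x hx
  exact cut_zero hR (le_of_lt (by simpa [dist_eq_norm] using hx))

lemma cut_one {x : E₃} (hx : ‖x‖ ≤ R) : cut R x = 1 := by
  apply bmp.one_of_mem_closedBall
  have : ‖R⁻¹ • x‖ ≤ 1 := by
    rw [norm_smul, Real.norm_eq_abs, abs_of_pos (by positivity)]
    calc R⁻¹ * ‖x‖ ≤ R⁻¹ * R := mul_le_mul_of_nonneg_left hx (by positivity)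
    _ = 1 := by field_simp
  simpa [bmp, dist_eq_norm] using this

omit hR in lemma cut_nonneg (x : E₃) : 0 ≤ cut R x := bmp.nonneg
omit hR in lemma cut_le_one (x : E₃) : cut R x ≤ 1 := bmp.le_one

omit hR in
lemma cut_fderiv_bound : ∃ C, 0 ≤ C ∧ ∀ R : ℝ, 0 < R → ∀ x : E₃, ‖fderiv ℝ (cut R) x‖ ≤ C / R := by
  obtain ⟨C, hC⟩ := (((bmp.contDiff (n := (⊤ : ℕ∞))).fderiv_right (m := (⊤:ℕ∞))
    (by simp)).continuous).bounded_above_of_compact_support (bmp.hasCompactSupport.fderiv (𝕜 := ℝ))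
  refine ⟨max C 0, le_max_right _ _, fun R hR x => ?_⟩
  have hL : (cut R) = (bmp : E₃ → ℝ) ∘ (fun y : E₃ => R⁻¹ • y) := rfl
  have hdL : HasFDerivAt (fun y : E₃ => R⁻¹ • y) (R⁻¹ • ContinuousLinearMap.id ℝ E₃) x := by
    exact (hasFDerivAt_id x).const_smul (R⁻¹)
  have hdb : DifferentiableAt ℝ (bmp : E₃ → ℝ) (R⁻¹ • x) :=
    (bmp.contDiff (n := (⊤:ℕ∞))).differentiable (by simp) |>.differentiableAt
  have : fderiv ℝ (cut R) x
      = (fderiv ℝ (bmp : E₃ → ℝ) (R⁻¹ • x)).comp (R⁻¹ • ContinuousLinearMap.id ℝ E₃) := by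
    rw [hL]
    exact (hdb.hasFDerivAt.comp x hdL).fderiv
  rw [this]
  calc ‖(fderiv ℝ (bmp : E₃ → ℝ) (R⁻¹ • x)).comp (R⁻¹ • ContinuousLinearMap.id ℝ E₃)‖
      ≤ ‖fderiv ℝ (bmp : E₃ → ℝ) (R⁻¹ • x)‖ * ‖R⁻¹ • ContinuousLinearMap.id ℝ E₃‖ :=
        ContinuousLinearMap.opNorm_comp_le _ _
    _ ≤ (max C 0) * R⁻¹ := by
        apply mul_le_mul ((hC _).trans (le_max_left _ _)) ?_ (norm_nonneg _) (le_max_right _ _)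
        calc ‖R⁻¹ • ContinuousLinearMap.id ℝ E₃‖ ≤ ‖R⁻¹‖ * ‖ContinuousLinearMap.id ℝ E₃‖ :=
              ContinuousLinearMap.opNorm_smul_le _ _
        _ ≤ R⁻¹ * 1 := by
            rw [Real.norm_eq_abs, abs_of_pos (by positivity)]
            exact mul_le_mul_of_nonneg_left ContinuousLinearMap.norm_id_le (by positivity)
        _ = R⁻¹ := mul_one _
    _ = (max C 0) / R := by rw [div_eq_mul_inv]

end cutoff

lemma cacc (u : E₃ → ℝ) (hu : ContDiff ℝ (⊤:ℕ∞) u)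
    (hharm : ∀ x, ∑ j : Fin 3, fderiv ℝ (fun y => fderiv ℝ u y (e3 j)) x (e3 j) = 0)
    (hL2 : Integrable (fun x => (u x)^2) volume)
    {R : ℝ} (hR : 0 < R) {C : ℝ} (hC0 : 0 ≤ C)
    (hCb : ∀ x : E₃, ‖fderiv ℝ (cut R) x‖ ≤ C / R) :
    ∑ j : Fin 3, ∫ x, (cut R x * cut R x) * (fderiv ℝ u x (e3 j))^2
      ≤ 12 * (C/R)^2 * ∫ x, (u x)^2 := by
  set χ := cut R with hχ
  have hχsm : ContDiff ℝ (⊤:ℕ∞) χ := cut_smooth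
  have hχcs : HasCompactSupport χ := cut_hcs hR
  have husm := hu
  -- vanishing helper
  have keyInt : ∀ g : E₃ → ℝ, Continuous g → (∀ x, x ∉ tsupport χ → g x = 0) →
      Integrable g volume := by
    intro g hg h0
    refine hg.integrable_of_hasCompactSupport (hχcs.mono' ?_)
    intro x hx
    by_contra hxts
    exact hx (h0 x hxts)
  have hχ0 : ∀ x, x ∉ tsupport χ → χ x = 0 := fun x hx => image_eq_zero_of_notMem_tsupport hx
  -- partial derivative notation
  set p : Fin 3 → E₃ → ℝ := fun j x => fderiv ℝ u x (e3 j) with hp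
  have hpsm : ∀ j, ContDiff ℝ (⊤:ℕ∞) (p j) := fun j => smooth_pd hu _
  set f : E₃ → ℝ := fun x => (χ x * χ x) * u x with hf
  have hfsm : ContDiff ℝ (⊤:ℕ∞) f := (hχsm.mul hχsm).mul hu
  have hf0 : ∀ x, x ∉ tsupport χ → f x = 0 := by
    intro x hx; simp [hf, hχ0 x hx]
  have hftsup : tsupport f ⊆ tsupport χ := by
    apply closure_minimal ?_ isClosed_closure
    intro x hx
    by_contra hxts
    exact hx (hf0 x hxts)
  have hdf0 : ∀ x, x ∉ tsupport χ → fderiv ℝ f x = 0 := by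
    intro x hx
    exact fderiv_of_notMem_tsupport ℝ (fun h => hx (hftsup h))
  have hdχ0 : ∀ x, x ∉ tsupport χ → fderiv ℝ χ x = 0 := by
    intro x hx
    exact fderiv_of_notMem_tsupport ℝ hx
  -- product rule
  have hfd : ∀ (j : Fin 3) x, fderiv ℝ f x (e3 j)
      = (2 * χ x * fderiv ℝ χ x (e3 j)) * u x + (χ x * χ x) * p j x := by
    intro j x
    have hχx : HasFDerivAt χ (fderiv ℝ χ x) x :=
      (hχsm.differentiable (by simp) x).hasFDerivAt
    have hux : HasFDerivAt u (fderiv ℝ u x) x :=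
      (hu.differentiable (by simp) x).hasFDerivAt
    have H := (hχx.mul hχx).mul hux
    rw [hf, show (fun x => χ x * χ x * u x) = χ * χ * u from rfl, H.fderiv]
    simp only [Pi.mul_apply, ContinuousLinearMap.add_apply, ContinuousLinearMap.smul_apply, smul_eq_mul, hp]
    ring
  -- integrability of all players
  have int1 : ∀ j : Fin 3, Integrable (fun x => f x *
      fderiv ℝ (fun y => fderiv ℝ u y (e3 j)) x (e3 j)) volume := by
    intro j
    refine keyInt _ (hfsm.continuous.mul (smooth_pd (hpsm j) _).continuous) ?_
    intro x hx; simp [hf0 x hx]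
  have int2 : ∀ j : Fin 3, Integrable (fun x => fderiv ℝ f x (e3 j) * p j x) volume := by
    intro j
    refine keyInt _ ((smooth_pd hfsm _).continuous.mul (hpsm j).continuous) ?_
    intro x hx; simp [hdf0 x hx]
  have int3 : ∀ j : Fin 3, Integrable (fun x => f x * p j x) volume := by
    intro j
    refine keyInt _ (hfsm.continuous.mul (hpsm j).continuous) ?_
    intro x hx; simp [hf0 x hx]
  have intA : ∀ j : Fin 3, Integrable (fun x => (χ x * χ x) * (p j x)^2) volume := by
    intro j
    refine keyInt _ ((hχsm.continuous.mul hχsm.continuous).mul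
      ((hpsm j).continuous.pow 2)) ?_
    intro x hx; simp [hχ0 x hx]
  have intB : ∀ j : Fin 3, Integrable
      (fun x => (2 * χ x * fderiv ℝ χ x (e3 j)) * u x * p j x) volume := by
    intro j
    refine keyInt _ ((((continuous_const.mul hχsm.continuous).mul
      (smooth_pd hχsm _).continuous).mul hu.continuous).mul (hpsm j).continuous) ?_
    intro x hx; simp [hχ0 x hx]
  have intU : ∀ j : Fin 3, Integrable
      (fun x => (u x)^2 * (fderiv ℝ χ x (e3 j))^2) volume := by
    intro j
    refine keyInt _ ((hu.continuous.pow 2).mul ((smooth_pd hχsm _).continuous.pow 2)) ?_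
    intro x hx; simp [hdχ0 x hx]
  -- integration by parts
  have ibp : ∀ j : Fin 3, ∫ x, f x * fderiv ℝ (fun y => fderiv ℝ u y (e3 j)) x (e3 j)
      = - ∫ x, fderiv ℝ f x (e3 j) * p j x := by
    intro j
    exact integral_mul_fderiv_eq_neg_fderiv_mul_of_integrable (int2 j) (int1 j) (int3 j)
      (fun x _ => hfsm.differentiable (by simp) x) (fun x _ => (hpsm j).differentiable (by simp) x)
  -- sum vanishes by harmonicity
  have hsum0 : ∑ j : Fin 3, ∫ x, f x * fderiv ℝ (fun y => fderiv ℝ u y (e3 j)) x (e3 j) = 0 := by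
    rw [← integral_finset_sum _ (fun j _ => int1 j)]
    have : ∀ x : E₃, ∑ j : Fin 3,
        f x * fderiv ℝ (fun y => fderiv ℝ u y (e3 j)) x (e3 j) = 0 := by
      intro x
      rw [← Finset.mul_sum, hharm x, mul_zero]
    simp only [this, integral_zero]
  -- split
  have split : ∀ j : Fin 3, ∫ x, fderiv ℝ f x (e3 j) * p j x
      = (∫ x, (2 * χ x * fderiv ℝ χ x (e3 j)) * u x * p j x)
        + ∫ x, (χ x * χ x) * (p j x)^2 := by
    intro j
    rw [← integral_add (intB j) (intA j)]
    congr 1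
    funext x
    rw [hfd j x]
    ring
  have hAB : ∑ j : Fin 3, ∫ x, (χ x * χ x) * (p j x)^2
      = ∑ j : Fin 3, -(∫ x, (2 * χ x * fderiv ℝ χ x (e3 j)) * u x * p j x) := by
    have h1 : ∑ j : Fin 3, ((∫ x, (2 * χ x * fderiv ℝ χ x (e3 j)) * u x * p j x)
        + ∫ x, (χ x * χ x) * (p j x)^2) = 0 := by
      rw [← Finset.sum_congr rfl (fun j _ => split j)]
      have := hsum0
      rw [Finset.sum_congr rfl (fun j _ => ibp j)] at this
      rw [Finset.sum_neg_distrib] at this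
      linarith [this]
    rw [Finset.sum_add_distrib] at h1
    rw [Finset.sum_neg_distrib]
    linarith [h1]
  -- bound each -B term
  have hBbound : ∀ j : Fin 3, -(∫ x, (2 * χ x * fderiv ℝ χ x (e3 j)) * u x * p j x)
      ≤ (1/2) * (∫ x, (χ x * χ x) * (p j x)^2) + 2 * ((C/R)^2 * ∫ x, (u x)^2) := by
    intro j
    have hdχb : ∀ x, |fderiv ℝ χ x (e3 j)| ≤ C / R := by
      intro x
      calc |fderiv ℝ χ x (e3 j)| = ‖fderiv ℝ χ x (e3 j)‖ := rfl
      _ ≤ ‖fderiv ℝ χ x‖ * ‖e3 j‖ := (fderiv ℝ χ x).le_opNorm _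
      _ = ‖fderiv ℝ χ x‖ := by rw [e3_norm, mul_one]
      _ ≤ C / R := hCb x
    have step1 : -(∫ x, (2 * χ x * fderiv ℝ χ x (e3 j)) * u x * p j x)
        ≤ ∫ x, ((1/2) * ((χ x * χ x) * (p j x)^2) + 2 * ((u x)^2 * (fderiv ℝ χ x (e3 j))^2)) := by
      rw [← integral_neg]
      apply integral_mono ((intB j).neg)
        (((intA j).const_mul _).add ((intU j).const_mul _))
      intro x
      have h := sq_nonneg (χ x * p j x + 2 * fderiv ℝ χ x (e3 j) * u x)
      simp only [Pi.neg_apply, Pi.add_apply]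
      nlinarith [h]
    have step2 : ∫ x, ((1/2) * ((χ x * χ x) * (p j x)^2)
          + 2 * ((u x)^2 * (fderiv ℝ χ x (e3 j))^2))
        = (1/2) * (∫ x, (χ x * χ x) * (p j x)^2)
          + 2 * ∫ x, (u x)^2 * (fderiv ℝ χ x (e3 j))^2 := by
      rw [integral_add ((intA j).const_mul _) ((intU j).const_mul _),
        integral_const_mul, integral_const_mul]
    have step3 : ∫ x, (u x)^2 * (fderiv ℝ χ x (e3 j))^2 ≤ (C/R)^2 * ∫ x, (u x)^2 := by
      rw [← integral_const_mul]
      apply integral_mono (intU j) (hL2.const_mul _)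
      intro x
      have h1 := hdχb x
      have h2 : (fderiv ℝ χ x (e3 j))^2 ≤ (C/R)^2 := by
        rw [← sq_abs]
        exact pow_le_pow_left₀ (abs_nonneg _) h1 2
      nlinarith [sq_nonneg (u x)]
    calc -(∫ x, (2 * χ x * fderiv ℝ χ x (e3 j)) * u x * p j x)
        ≤ (1/2) * (∫ x, (χ x * χ x) * (p j x)^2)
          + 2 * ∫ x, (u x)^2 * (fderiv ℝ χ x (e3 j))^2 := by rw [← step2]; exact step1
      _ ≤ (1/2) * (∫ x, (χ x * χ x) * (p j x)^2) + 2 * ((C/R)^2 * ∫ x, (u x)^2) := by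
          linarith [step3]
  -- combine
  have h2 : ∑ j : Fin 3, -(∫ x, (2 * χ x * fderiv ℝ χ x (e3 j)) * u x * p j x)
      ≤ (1/2) * ∑ j : Fin 3, (∫ x, (χ x * χ x) * (p j x)^2)
        + 6 * ((C/R)^2 * ∫ x, (u x)^2) := by
    calc ∑ j : Fin 3, -(∫ x, (2 * χ x * fderiv ℝ χ x (e3 j)) * u x * p j x)
        ≤ ∑ j : Fin 3, ((1/2) * (∫ x, (χ x * χ x) * (p j x)^2)
            + 2 * ((C/R)^2 * ∫ x, (u x)^2)) := Finset.sum_le_sum (fun j _ => hBbound j)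
      _ = (1/2) * ∑ j : Fin 3, (∫ x, (χ x * χ x) * (p j x)^2)
            + 6 * ((C/R)^2 * ∫ x, (u x)^2) := by
          rw [Finset.sum_add_distrib, ← Finset.mul_sum, Finset.sum_const, Finset.card_univ,
            Fintype.card_fin, nsmul_eq_mul]
          push_cast
          ring
  linarith [hAB, h2]

lemma harmonic_L2_zero (u : E₃ → ℝ) (hu : ContDiff ℝ (⊤:ℕ∞) u)
    (hharm : ∀ x, ∑ j : Fin 3, fderiv ℝ (fun y => fderiv ℝ u y (e3 j)) x (e3 j) = 0)
    (hL2 : Integrable (fun x => (u x)^2) volume) : ∀ x, u x = 0 := by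
  obtain ⟨C, hC0, hCb⟩ := cut_fderiv_bound
  have hp0 : ∀ (j : Fin 3) (z : E₃), fderiv ℝ u z (e3 j) = 0 := by
    intro j z
    have hgc : Continuous (fun x => (fderiv ℝ u x (e3 j))^2) :=
      ((smooth_pd hu (e3 j)).continuous).pow 2
    have hgnn : ∀ x, 0 ≤ (fderiv ℝ u x (e3 j))^2 := fun x => sq_nonneg _
    have hball : ∀ r : ℝ, 0 < r → ∫ x in ball (0:E₃) r, (fderiv ℝ u x (e3 j))^2 = 0 := by
      intro r hr
      have hint : IntegrableOn (fun x => (fderiv ℝ u x (e3 j))^2) (ball (0:E₃) r) volume :=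
        ((hgc.continuousOn).integrableOn_compact (isCompact_closedBall (0:E₃) r)).mono_set
          ball_subset_closedBall
      have hle : ∀ R : ℝ, max r 1 ≤ R →
          ∫ x in ball (0:E₃) r, (fderiv ℝ u x (e3 j))^2 ≤ 12*C^2*(∫ x, (u x)^2) / R^2 := by
        intro R hRr
        have hR : 0 < R := lt_of_lt_of_le (lt_of_lt_of_le one_pos (le_max_right r 1)) hRr
        have hconts : Continuous (fun x => (cut R x * cut R x) * (fderiv ℝ u x (e3 j))^2) :=
          ((cut_smooth (R := R)).continuous.mul (cut_smooth (R := R)).continuous).mul hgc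
        have hcs : HasCompactSupport (fun x => (cut R x * cut R x) * (fderiv ℝ u x (e3 j))^2) := by
          apply (cut_hcs hR).mono
          intro x hx h0
          exact hx (by simp [h0])
        have hintfull : Integrable (fun x => (cut R x * cut R x) * (fderiv ℝ u x (e3 j))^2)
            volume := hconts.integrable_of_hasCompactSupport hcs
        have h1 : ∫ x in ball (0:E₃) r, (fderiv ℝ u x (e3 j))^2
            = ∫ x in ball (0:E₃) r, (cut R x * cut R x) * (fderiv ℝ u x (e3 j))^2 := by
          apply setIntegral_congr_fun measurableSet_ball
          intro x hx
          have hxr : ‖x‖ ≤ R := by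
            have h := mem_ball_zero_iff.mp hx
            have : r ≤ R := le_trans (le_max_left r 1) hRr
            linarith
          show (fderiv ℝ u x) (e3 j) ^ 2 = cut R x * cut R x * (fderiv ℝ u x) (e3 j) ^ 2
          rw [cut_one hR hxr]
          ring
        have h2 : ∫ x in ball (0:E₃) r, (cut R x * cut R x) * (fderiv ℝ u x (e3 j))^2
            ≤ ∫ x, (cut R x * cut R x) * (fderiv ℝ u x (e3 j))^2 := by
          apply setIntegral_le_integral hintfull
          apply Filter.Eventually.of_forall
          intro x
          exact mul_nonneg (mul_nonneg (cut_nonneg x) (cut_nonneg x)) (hgnn x)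
        have h3 : ∫ x, (cut R x * cut R x) * (fderiv ℝ u x (e3 j))^2
            ≤ ∑ j' : Fin 3, ∫ x, (cut R x * cut R x) * (fderiv ℝ u x (e3 j'))^2 := by
          apply Finset.single_le_sum (f := fun j' : Fin 3 =>
            ∫ x, (cut R x * cut R x) * (fderiv ℝ u x (e3 j'))^2) ?_ (Finset.mem_univ j)
          intro j' _
          apply integral_nonneg
          intro x
          exact mul_nonneg (mul_nonneg (cut_nonneg x) (cut_nonneg x)) (sq_nonneg _)
        have h4 := cacc u hu hharm hL2 hR hC0 (hCb R hR)
        have h5 : 12*(C/R)^2 * (∫ x, (u x)^2) = 12*C^2*(∫ x, (u x)^2) / R^2 := by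
          rw [div_pow]; ring
        rw [h1]
        linarith [h2, h3, h4, h5.ge]
      have h0le : 0 ≤ ∫ x in ball (0:E₃) r, (fderiv ℝ u x (e3 j))^2 :=
        setIntegral_nonneg measurableSet_ball (fun x _ => hgnn x)
      have htend : Filter.Tendsto (fun R : ℝ => 12*C^2*(∫ x, (u x)^2) / R^2)
          Filter.atTop (nhds 0) :=
        Filter.Tendsto.div_atTop tendsto_const_nhds (Filter.tendsto_pow_atTop (n := 2) (by norm_num))
      have hle0 : ∫ x in ball (0:E₃) r, (fderiv ℝ u x (e3 j))^2 ≤ 0 :=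
        ge_of_tendsto htend (Filter.eventually_atTop.mpr ⟨max r 1, hle⟩)
      linarith
    by_contra hne
    have hz : z ∈ ball (0:E₃) (‖z‖ + 1) := mem_ball_zero_iff.mpr (by linarith [norm_nonneg z])
    have hsupp_open : IsOpen (support (fun x => (fderiv ℝ u x (e3 j))^2)) := by
      rw [Function.support_eq_preimage]
      exact (isOpen_compl_singleton).preimage hgc
    have hzin : z ∈ support (fun x => (fderiv ℝ u x (e3 j))^2) := by
      simp only [mem_support]
      exact pow_ne_zero 2 hne
    have hpos : 0 < volume (support (fun x => (fderiv ℝ u x (e3 j))^2) ∩ ball (0:E₃) (‖z‖+1)) :=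
      (hsupp_open.inter isOpen_ball).measure_pos _ ⟨z, hzin, hz⟩
    have hint : IntegrableOn (fun x => (fderiv ℝ u x (e3 j))^2) (ball (0:E₃) (‖z‖+1)) volume :=
      ((hgc.continuousOn).integrableOn_compact (isCompact_closedBall (0:E₃) (‖z‖+1))).mono_set
        ball_subset_closedBall
    have hposint := (setIntegral_pos_iff_support_of_nonneg_ae
      (Filter.Eventually.of_forall (fun x => hgnn x)) hint).mpr hpos
    rw [hball (‖z‖+1) (by linarith [norm_nonneg z])] at hposint
    exact lt_irrefl 0 hposint
  have hconst : ∀ x y : E₃, u x = u y := by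
    apply is_const_of_fderiv_eq_zero (hu.differentiable (by simp))
    intro x
    exact clm_zero_of_partials _ (fun i => hp0 i x)
  intro x
  have hL2' : Integrable (fun _ : E₃ => (u x)^2) volume := by
    have h : (fun y : E₃ => (u y)^2) = fun _ : E₃ => (u x)^2 :=
      funext fun y => by rw [hconst y x]
    rwa [h] at hL2
  rcases integrable_const_iff.mp hL2' with h | h
  · exact (pow_eq_zero_iff (two_ne_zero)).mp h
  · haveI := h
    exact absurd (measure_univ_of_isAddLeftInvariant (volume : Measure E₃)) (measure_ne_top _ _)

/-- A smooth harmonic function on `ℝ³` with square-integrable gradient is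
constant.  This is the finite-energy argument forcing `a = 0` and `φ = const = μ` in the
d-component `*da = dφ` of the loop-group Bogomolny equations. -/
theorem harmonic_finite_energy_constant
    (φ : EuclideanSpace ℝ (Fin 3) → ℝ)
    (hsmooth : ContDiff ℝ (⊤ : ℕ∞) φ)
    (hharm : ∀ x : EuclideanSpace ℝ (Fin 3),
      ∑ i : Fin 3,
        fderiv ℝ (fun y => fderiv ℝ φ y (EuclideanSpace.single i 1)) x
          (EuclideanSpace.single i 1) = 0)
    (hgrad : Integrable (fun x : EuclideanSpace ℝ (Fin 3) => ‖gradient φ x‖ ^ 2) volume) :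
    ∀ x y : EuclideanSpace ℝ (Fin 3), φ x = φ y := by
  have hsm : ContDiff ℝ (⊤:ℕ∞) φ := hsmooth.of_le (by simp)
  have hharm' : ∀ x : E₃, ∑ j : Fin 3,
      fderiv ℝ (fun y => fderiv ℝ φ y (e3 j)) x (e3 j) = 0 := hharm
  have hnorm : ∀ x : E₃, ‖fderiv ℝ φ x‖ = ‖gradient φ x‖ := by
    intro x
    rw [gradient]
    exact (LinearIsometryEquiv.norm_map _ _).symm
  -- each partial derivative vanishes identically
  have hzero : ∀ (i : Fin 3) (x : E₃), fderiv ℝ φ x (e3 i) = 0 := by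
    intro i
    set q : Fin 3 → E₃ → ℝ := fun j y => fderiv ℝ φ y (e3 j) with hq
    have hqsm : ∀ j, ContDiff ℝ (⊤:ℕ∞) (q j) := fun j => smooth_pd hsm _
    -- harmonicity of q i
    have hharm_q : ∀ x : E₃, ∑ j : Fin 3,
        fderiv ℝ (fun y => fderiv ℝ (q i) y (e3 j)) x (e3 j) = 0 := by
      intro x
      have hswap1 : ∀ j : Fin 3, (fun y => fderiv ℝ (q i) y (e3 j))
          = (fun y => fderiv ℝ (q j) y (e3 i)) :=
        fun j => funext fun y => swap_pd hsm y (e3 j) (e3 i)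
      have step : ∀ j : Fin 3, fderiv ℝ (fun y => fderiv ℝ (q i) y (e3 j)) x (e3 j)
          = fderiv ℝ (fun y => fderiv ℝ (q j) y (e3 j)) x (e3 i) := by
        intro j
        rw [hswap1 j]
        exact swap_pd (hqsm j) x (e3 j) (e3 i)
      rw [Finset.sum_congr rfl (fun j _ => step j)]
      have hdiff : ∀ j ∈ (Finset.univ : Finset (Fin 3)), DifferentiableAt ℝ
          (fun y => fderiv ℝ (q j) y (e3 j)) x :=
        fun j _ => ((smooth_pd (hqsm j) (e3 j)).differentiable (by simp)).differentiableAt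
      rw [← ContinuousLinearMap.sum_apply, ← fderiv_fun_sum hdiff]
      have hzero_fun : (fun y : E₃ => ∑ j : Fin 3, fderiv ℝ (q j) y (e3 j))
          = fun _ : E₃ => (0:ℝ) := funext fun y => hharm' y
      rw [hzero_fun, fderiv_const_apply]
      simp
    -- square integrability of q i
    have hL2 : Integrable (fun x : E₃ => (q i x)^2) volume := by
      apply Integrable.mono' hgrad ((smooth_pd hsm (e3 i)).continuous.pow 2).aestronglyMeasurable
      apply Filter.Eventually.of_forall
      intro x
      have h1 : |q i x| ≤ ‖gradient φ x‖ := by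
        calc |q i x| = ‖fderiv ℝ φ x (e3 i)‖ := rfl
        _ ≤ ‖fderiv ℝ φ x‖ * ‖e3 i‖ := (fderiv ℝ φ x).le_opNorm _
        _ = ‖gradient φ x‖ := by rw [e3_norm, mul_one, hnorm]
      have h2 : ‖(q i x)^2‖ = |q i x|^2 := by
        rw [Real.norm_eq_abs, ← sq_abs]
        exact abs_of_nonneg (sq_nonneg _)
      show ‖(q i x)^2‖ ≤ _
      rw [h2]
      exact pow_le_pow_left₀ (abs_nonneg _) h1 2
    exact harmonic_L2_zero (q i) (hqsm i) hharm_q hL2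
  apply is_const_of_fderiv_eq_zero (hsm.differentiable (by simp))
  intro x
  exact clm_zero_of_partials _ (fun i => hzero i x)

end HFEC
end
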